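/- arXiv:nlin/0109009 — 8 statements merged into one kernel-verified Lean document; each statement's English description precedes it below -/
import Mathlib

section
/- Let ε = 1 or ε = −1 and let b, c₀, c₁ : ℝ → ℝ be smooth. Let ũ : ℝ³ → ℝ be smooth and define u : ℝ³ → ℝ by u(x,y,t) = ũ(x − (ε/2)b(t)y, y, t) + ((ε/2)b′(t) − c₁(t))y − c₀(t) + (ε/4)b(t)². Then u satisfies the equation (u_t + u u_x + u_xxx)_x + ε u_yy + b(t) u_xy + (c₀(t) + c₁(t)y) u_xx = 0 at every point of ℝ³ if and only if ũ satisfies the Kadomtsev–Petviashvili equation (ũ_t + ũ ũ_x + ũ_xxx)_x + ε ũ_yy = 0 at every point of ℝ³. -/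
/-- Partial derivative in the first (x) variable. -/
noncomputable def px (u : ℝ → ℝ → ℝ → ℝ) (x y t : ℝ) : ℝ := deriv (fun s => u s y t) x
/-- Partial derivative in the second (y) variable. -/
noncomputable def py (u : ℝ → ℝ → ℝ → ℝ) (x y t : ℝ) : ℝ := deriv (fun s => u x s t) y
/-- Partial derivative in the third (t) variable. -/
noncomputable def pt (u : ℝ → ℝ → ℝ → ℝ) (x y t : ℝ) : ℝ := deriv (fun s => u x y s) t

/-- Smoothness of a function of three real variables. -/
def Smooth3 (u : ℝ → ℝ → ℝ → ℝ) : Prop :=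
  ContDiff ℝ (⊤ : ℕ∞) (fun p : ℝ × ℝ × ℝ => u p.1 p.2.1 p.2.2)

/-- The integrable canonical generalized KP equation (4.11):
`(u_t + u u_x + u_xxx)_x + ε u_yy + b(t) u_xy + (c₀(t) + c₁(t) y) u_xx = 0`. -/
def SolvesGKP (ε : ℝ) (b c₀ c₁ : ℝ → ℝ) (u : ℝ → ℝ → ℝ → ℝ) : Prop :=
  ∀ x y t : ℝ,
    px (fun x y t => pt u x y t + u x y t * px u x y t + px (px (px u)) x y t) x y t
      + ε * py (py u) x y t + b t * px (py u) x y t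
      + (c₀ t + c₁ t * y) * px (px u) x y t = 0

/-- The KP equation `(u_t + u u_x + u_xxx)_x + ε u_yy = 0`. -/
def SolvesKP (ε : ℝ) (u : ℝ → ℝ → ℝ → ℝ) : Prop :=
  ∀ x y t : ℝ,
    px (fun x y t => pt u x y t + u x y t * px u x y t + px (px (px u)) x y t) x y t
      + ε * py (py u) x y t = 0

/-- the transformation (4.16) takes the integrable CGKP equation (4.11)
into the KP equation itself. -/
noncomputable def Fn (v : ℝ → ℝ → ℝ → ℝ) : ℝ × ℝ × ℝ → ℝ := fun p => v p.1 p.2.1 p.2.2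

noncomputable def D (w : ℝ × ℝ × ℝ) (v : ℝ → ℝ → ℝ → ℝ) : ℝ → ℝ → ℝ → ℝ :=
  fun x y t => fderiv ℝ (Fn v) (x, y, t) w

noncomputable def D1 (v : ℝ → ℝ → ℝ → ℝ) : ℝ → ℝ → ℝ → ℝ := D (1,0,0) v
noncomputable def D2 (v : ℝ → ℝ → ℝ → ℝ) : ℝ → ℝ → ℝ → ℝ := D (0,1,0) v
noncomputable def D3 (v : ℝ → ℝ → ℝ → ℝ) : ℝ → ℝ → ℝ → ℝ := D (0,0,1) v

lemma smooth3_D (w : ℝ × ℝ × ℝ) {v : ℝ → ℝ → ℝ → ℝ} (hv : Smooth3 v) : Smooth3 (D w v) :=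
  ((hv : ContDiff ℝ (⊤ : ℕ∞) (Fn v)).fderiv_right (by simp)).clm_apply contDiff_const

lemma hasDerivAt_Fn {v : ℝ → ℝ → ℝ → ℝ} (hv : Smooth3 v) {γ : ℝ → ℝ × ℝ × ℝ}
    {γ' : ℝ × ℝ × ℝ} {s : ℝ} (hγ : HasDerivAt γ γ' s) :
    HasDerivAt (fun r => Fn v (γ r)) (fderiv ℝ (Fn v) (γ s) γ') s :=
  (((hv : ContDiff ℝ (⊤ : ℕ∞) (Fn v)).differentiable (by simp) (γ s)).hasFDerivAt).comp_hasDerivAt s hγ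

lemma hasD_x {w : ℝ → ℝ → ℝ → ℝ} (hw : Smooth3 w) (A y t x : ℝ) :
    HasDerivAt (fun s => w (s - A) y t) (D (1,0,0) w (x - A) y t) x :=
  hasDerivAt_Fn hw (((hasDerivAt_id x).sub_const A).prodMk
    ((hasDerivAt_const x y).prodMk (hasDerivAt_const x t)))

lemma hasD_x0 {w : ℝ → ℝ → ℝ → ℝ} (hw : Smooth3 w) (y t x : ℝ) :
    HasDerivAt (fun s => w s y t) (D (1,0,0) w x y t) x :=
  hasDerivAt_Fn hw ((hasDerivAt_id x).prodMk
    ((hasDerivAt_const x y).prodMk (hasDerivAt_const x t)))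

lemma hasD_y {w : ℝ → ℝ → ℝ → ℝ} (hw : Smooth3 w) (x c t y : ℝ) :
    HasDerivAt (fun s => w (x - c * s) s t) (D (-c,1,0) w (x - c * y) y t) y := by
  have h1 : HasDerivAt (fun s : ℝ => x - c * s) (-c) y := by
    simpa using (HasDerivAt.const_mul c (hasDerivAt_id y)).const_sub x
  exact hasDerivAt_Fn hw (h1.prodMk ((hasDerivAt_id y).prodMk (hasDerivAt_const y t)))

lemma hasD_y0 {w : ℝ → ℝ → ℝ → ℝ} (hw : Smooth3 w) (x t y : ℝ) :
    HasDerivAt (fun s => w x s t) (D (0,1,0) w x y t) y :=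
  hasDerivAt_Fn hw ((hasDerivAt_const y x).prodMk
    ((hasDerivAt_id y).prodMk (hasDerivAt_const y t)))

lemma hasD_t_shift {w : ℝ → ℝ → ℝ → ℝ} (hw : Smooth3 w) {a : ℝ → ℝ} {a' : ℝ} {t : ℝ}
    (ha : HasDerivAt a a' t) (x y : ℝ) :
    HasDerivAt (fun s => w (x - a s * y) y s) (D (-(a' * y),0,1) w (x - a t * y) y t) t := by
  have h1 : HasDerivAt (fun s : ℝ => x - a s * y) (-(a' * y)) t :=
    (ha.mul_const y).const_sub x
  exact hasDerivAt_Fn hw (h1.prodMk ((hasDerivAt_const t y).prodMk (hasDerivAt_id t)))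

lemma hasD_t0 {w : ℝ → ℝ → ℝ → ℝ} (hw : Smooth3 w) (x y t : ℝ) :
    HasDerivAt (fun s => w x y s) (D (0,0,1) w x y t) t :=
  hasDerivAt_Fn hw ((hasDerivAt_const t x).prodMk
    ((hasDerivAt_const t y).prodMk (hasDerivAt_id t)))

lemma D_expand (v : ℝ → ℝ → ℝ → ℝ) (p q r x y t : ℝ) :
    D (p,q,r) v x y t = p * D1 v x y t + q * D2 v x y t + r * D3 v x y t := by
  have h : ((p,q,r) : ℝ × ℝ × ℝ) =
      p • ((1,0,0) : ℝ × ℝ × ℝ) + q • ((0,1,0) : ℝ × ℝ × ℝ) + r • ((0,0,1) : ℝ × ℝ × ℝ) := by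
    simp [Prod.ext_iff]
  show (fderiv ℝ (Fn v) (x,y,t)) (p,q,r) = _
  rw [h, map_add, map_add, map_smul, map_smul, map_smul]
  rfl

lemma D_comm {v : ℝ → ℝ → ℝ → ℝ} (hv : Smooth3 v) (w₁ w₂ : ℝ × ℝ × ℝ) (x y t : ℝ) :
    D w₁ (D w₂ v) x y t = D w₂ (D w₁ v) x y t := by
  have hv' : ContDiff ℝ (⊤ : ℕ∞) (Fn v) := hv
  have hd : Differentiable ℝ (fderiv ℝ (Fn v)) :=
    (hv'.fderiv_right (m := (⊤ : ℕ∞)) (by simp)).differentiable (by simp)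
  have key : ∀ w w' : ℝ × ℝ × ℝ,
      D w (D w' v) x y t = fderiv ℝ (fderiv ℝ (Fn v)) (x,y,t) w w' := by
    intro w w'
    show fderiv ℝ (fun p => fderiv ℝ (Fn v) p w') (x,y,t) w = _
    rw [fderiv_clm_apply (hd _) (differentiableAt_const _)]
    simp
  rw [key, key]
  exact second_derivative_symmetric (fun p => (hv'.differentiable (by simp) p).hasFDerivAt)
    ((hd (x,y,t)).hasFDerivAt) w₁ w₂

theorem stmt0 (ε : ℝ) (hε : ε = 1 ∨ ε = -1)
    (b c₀ c₁ : ℝ → ℝ) (hb : ContDiff ℝ (⊤ : ℕ∞) b) (hc₀ : ContDiff ℝ (⊤ : ℕ∞) c₀) (hc₁ : ContDiff ℝ (⊤ : ℕ∞) c₁)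
    (v : ℝ → ℝ → ℝ → ℝ) (hv : Smooth3 v)
    (u : ℝ → ℝ → ℝ → ℝ)
    (hu : u = fun x y t =>
      v (x - ε / 2 * b t * y) y t + (ε / 2 * deriv b t - c₁ t) * y - c₀ t + ε / 4 * (b t) ^ 2) :
    SolvesGKP ε b c₀ c₁ u ↔ SolvesKP ε v := by
  have hε2 : ε * ε = 1 := by rcases hε with h | h <;> rw [h] <;> norm_num
  have hD1 : Smooth3 (D1 v) := smooth3_D _ hv
  have hD2 : Smooth3 (D2 v) := smooth3_D _ hv
  have hD3 : Smooth3 (D3 v) := smooth3_D _ hv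
  have hD11 : Smooth3 (D1 (D1 v)) := smooth3_D _ hD1
  have hD111 : Smooth3 (D1 (D1 (D1 v))) := smooth3_D _ hD11
  have hsym : ∀ x y t : ℝ, D1 (D2 v) x y t = D2 (D1 v) x y t :=
    fun x y t => D_comm hv (1,0,0) (0,1,0) x y t
  have hdb : Differentiable ℝ (deriv b) :=
    (contDiff_infty_iff_deriv.mp (hb.of_le (by simp))).2.differentiable (by simp)
  have hbd : Differentiable ℝ b := hb.differentiable (by simp)
  have hc₀d : Differentiable ℝ c₀ := hc₀.differentiable (by simp)
  have hc₁d : Differentiable ℝ c₁ := hc₁.differentiable (by simp)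
  -- first derivatives of u
  have h1x : ∀ x y t : ℝ, px u x y t = D1 v (x - ε / 2 * b t * y) y t := by
    intro x y t
    rw [hu]
    exact ((((hasD_x hv (ε / 2 * b t * y) y t x).add_const
      ((ε / 2 * deriv b t - c₁ t) * y)).sub_const (c₀ t)).add_const (ε / 4 * b t ^ 2)).deriv
  have hpxfun : px u = fun x y t => D1 v (x - ε / 2 * b t * y) y t := by
    funext x y t; exact h1x x y t
  have h1y : ∀ x y t : ℝ, py u x y t = -(ε / 2 * b t) * D1 v (x - ε / 2 * b t * y) y t
      + D2 v (x - ε / 2 * b t * y) y t + (ε / 2 * deriv b t - c₁ t) := by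
    intro x y t
    have Hlin : HasDerivAt (fun s : ℝ => (ε / 2 * deriv b t - c₁ t) * s)
        (ε / 2 * deriv b t - c₁ t) y := by
      simpa using HasDerivAt.const_mul (ε / 2 * deriv b t - c₁ t) (hasDerivAt_id y)
    have h0 : py u x y t = D (-(ε / 2 * b t),1,0) v (x - ε / 2 * b t * y) y t
        + (ε / 2 * deriv b t - c₁ t) := by
      rw [hu]
      exact ((((hasD_y hv x (ε / 2 * b t) t y).add Hlin).sub_const (c₀ t)).add_const
        (ε / 4 * b t ^ 2)).deriv
    rw [h0, D_expand]; ring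
  have hpyfun : py u = fun x y t => -(ε / 2 * b t) * D1 v (x - ε / 2 * b t * y) y t
      + D2 v (x - ε / 2 * b t * y) y t + (ε / 2 * deriv b t - c₁ t) := by
    funext x y t; exact h1y x y t
  have h1t : ∀ x y t : ℝ, pt u x y t =
      -(ε / 2 * deriv b t * y) * D1 v (x - ε / 2 * b t * y) y t
      + D3 v (x - ε / 2 * b t * y) y t
      + (deriv (fun s => (ε / 2 * deriv b s - c₁ s) * y) t - deriv c₀ t
         + deriv (fun s => ε / 4 * b s ^ 2) t) := by
    intro x y t
    have Ha : HasDerivAt (fun s => ε / 2 * b s) (ε / 2 * deriv b t) t :=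
      HasDerivAt.const_mul (ε / 2) (hbd t).hasDerivAt
    have Hp1 : HasDerivAt (fun s => (ε / 2 * deriv b s - c₁ s) * y)
        (deriv (fun s => (ε / 2 * deriv b s - c₁ s) * y) t) t :=
      ((((hdb t).const_mul (ε / 2)).sub (hc₁d t)).mul_const y).hasDerivAt
    have Hp3 : HasDerivAt (fun s => ε / 4 * b s ^ 2)
        (deriv (fun s => ε / 4 * b s ^ 2) t) t :=
      (((hbd t).pow 2).const_mul (ε / 4)).hasDerivAt
    have h0 : pt u x y t = D (-(ε / 2 * deriv b t * y),0,1) v (x - ε / 2 * b t * y) y t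
        + deriv (fun s => (ε / 2 * deriv b s - c₁ s) * y) t - deriv c₀ t
        + deriv (fun s => ε / 4 * b s ^ 2) t := by
      rw [hu]
      exact ((((hasD_t_shift hv Ha x y).add Hp1).sub (hc₀d t).hasDerivAt).add Hp3).deriv
    rw [h0, D_expand]; ring
  have hptfun : pt u = fun x y t =>
      -(ε / 2 * deriv b t * y) * D1 v (x - ε / 2 * b t * y) y t
      + D3 v (x - ε / 2 * b t * y) y t
      + (deriv (fun s => (ε / 2 * deriv b s - c₁ s) * y) t - deriv c₀ t
         + deriv (fun s => ε / 4 * b s ^ 2) t) := by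
    funext x y t; exact h1t x y t
  -- second derivatives of u
  have h2xx : ∀ x y t : ℝ, px (px u) x y t = D1 (D1 v) (x - ε / 2 * b t * y) y t := by
    intro x y t; rw [hpxfun]; exact (hasD_x hD1 (ε / 2 * b t * y) y t x).deriv
  have hpxxfun : px (px u) = fun x y t => D1 (D1 v) (x - ε / 2 * b t * y) y t := by
    funext x y t; exact h2xx x y t
  have hpxxxfun : px (px (px u)) = fun x y t =>
      D1 (D1 (D1 v)) (x - ε / 2 * b t * y) y t := by
    rw [hpxxfun]; funext x y t; exact (hasD_x hD11 (ε / 2 * b t * y) y t x).deriv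
  have h2xy : ∀ x y t : ℝ, px (py u) x y t =
      -(ε / 2 * b t) * D1 (D1 v) (x - ε / 2 * b t * y) y t
      + D1 (D2 v) (x - ε / 2 * b t * y) y t := by
    intro x y t
    rw [hpyfun]
    exact (((HasDerivAt.const_mul (-(ε / 2 * b t)) (hasD_x hD1 (ε / 2 * b t * y) y t x)).add
      (hasD_x hD2 (ε / 2 * b t * y) y t x)).add_const (ε / 2 * deriv b t - c₁ t)).deriv
  have h2yy : ∀ x y t : ℝ, py (py u) x y t =
      -(ε / 2 * b t) * (-(ε / 2 * b t) * D1 (D1 v) (x - ε / 2 * b t * y) y t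
        + D2 (D1 v) (x - ε / 2 * b t * y) y t)
      + (-(ε / 2 * b t) * D1 (D2 v) (x - ε / 2 * b t * y) y t
        + D2 (D2 v) (x - ε / 2 * b t * y) y t) := by
    intro x y t
    have h0 : py (py u) x y t =
        -(ε / 2 * b t) * D (-(ε / 2 * b t),1,0) (D1 v) (x - ε / 2 * b t * y) y t
        + D (-(ε / 2 * b t),1,0) (D2 v) (x - ε / 2 * b t * y) y t := by
      rw [hpyfun]
      exact (((HasDerivAt.const_mul (-(ε / 2 * b t)) (hasD_y hD1 x (ε / 2 * b t) t y)).add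
        (hasD_y hD2 x (ε / 2 * b t) t y)).add_const (ε / 2 * deriv b t - c₁ t)).deriv
    rw [h0, D_expand, D_expand]; ring
  have hfx : ∀ x y t : ℝ,
      px (fun x y t => pt u x y t + u x y t * px u x y t + px (px (px u)) x y t) x y t =
      -(ε / 2 * deriv b t * y) * D1 (D1 v) (x - ε / 2 * b t * y) y t
      + D1 (D3 v) (x - ε / 2 * b t * y) y t
      + (D1 v (x - ε / 2 * b t * y) y t * D1 v (x - ε / 2 * b t * y) y t
        + (v (x - ε / 2 * b t * y) y t + (ε / 2 * deriv b t - c₁ t) * y - c₀ t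
          + ε / 4 * b t ^ 2) * D1 (D1 v) (x - ε / 2 * b t * y) y t)
      + D1 (D1 (D1 (D1 v))) (x - ε / 2 * b t * y) y t := by
    intro x y t
    rw [hpxxxfun, hptfun, hpxfun, hu]
    exact (((((HasDerivAt.const_mul (-(ε / 2 * deriv b t * y))
        (hasD_x hD1 (ε / 2 * b t * y) y t x)).add
        (hasD_x hD3 (ε / 2 * b t * y) y t x)).add_const
        (deriv (fun s => (ε / 2 * deriv b s - c₁ s) * y) t - deriv c₀ t
         + deriv (fun s => ε / 4 * b s ^ 2) t)).add
      (((((hasD_x hv (ε / 2 * b t * y) y t x).add_const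
        ((ε / 2 * deriv b t - c₁ t) * y)).sub_const (c₀ t)).add_const
        (ε / 4 * b t ^ 2)).mul
        (hasD_x hD1 (ε / 2 * b t * y) y t x))).add
      (hasD_x hD111 (ε / 2 * b t * y) y t x)).deriv
  -- KP side for v
  have kxfun : px v = D1 v := by funext x y t; exact (hasD_x0 hv y t x).deriv
  have kyfun : py v = D2 v := by funext x y t; exact (hasD_y0 hv x t y).deriv
  have ktfun : pt v = D3 v := by funext x y t; exact (hasD_t0 hv x y t).deriv
  have kxxfun : px (px v) = D1 (D1 v) := by
    rw [kxfun]; funext x y t; exact (hasD_x0 hD1 y t x).deriv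
  have kxxxfun : px (px (px v)) = D1 (D1 (D1 v)) := by
    rw [kxxfun]; funext x y t; exact (hasD_x0 hD11 y t x).deriv
  have kyy : ∀ x y t : ℝ, py (py v) x y t = D2 (D2 v) x y t := by
    intro x y t; rw [kyfun]; exact (hasD_y0 hD2 x t y).deriv
  have kfx : ∀ x y t : ℝ,
      px (fun x y t => pt v x y t + v x y t * px v x y t + px (px (px v)) x y t) x y t =
      D1 (D3 v) x y t + (D1 v x y t * D1 v x y t + v x y t * D1 (D1 v) x y t)
      + D1 (D1 (D1 (D1 v))) x y t := by
    intro x y t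
    rw [kxxxfun, ktfun, kxfun]
    exact (((hasD_x0 hD3 y t x).add ((hasD_x0 hv y t x).mul (hasD_x0 hD1 y t x))).add
      (hasD_x0 hD111 y t x)).deriv
  -- the main pointwise identity
  have hmain : ∀ x y t : ℝ,
      px (fun x y t => pt u x y t + u x y t * px u x y t + px (px (px u)) x y t) x y t
        + ε * py (py u) x y t + b t * px (py u) x y t
        + (c₀ t + c₁ t * y) * px (px u) x y t
      = D1 (D3 v) (x - ε / 2 * b t * y) y t
        + (D1 v (x - ε / 2 * b t * y) y t * D1 v (x - ε / 2 * b t * y) y t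
           + v (x - ε / 2 * b t * y) y t * D1 (D1 v) (x - ε / 2 * b t * y) y t)
        + D1 (D1 (D1 (D1 v))) (x - ε / 2 * b t * y) y t
        + ε * D2 (D2 v) (x - ε / 2 * b t * y) y t := by
    intro x y t
    rw [hfx x y t, h2yy x y t, h2xy x y t, h2xx x y t, hsym]
    linear_combination (ε / 4 * b t ^ 2 * D1 (D1 v) (x - ε / 2 * b t * y) y t
      - b t * D2 (D1 v) (x - ε / 2 * b t * y) y t) * hε2
  constructor
  · intro h x y t
    have h2 := h (x + ε / 2 * b t * y) y t
    rw [hmain] at h2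
    have e : x + ε / 2 * b t * y - ε / 2 * b t * y = x := by ring
    rw [e] at h2
    rw [kfx x y t, kyy x y t]
    exact h2
  · intro h x y t
    rw [hmain]
    have h2 := h (x - ε / 2 * b t * y) y t
    rw [kfx, kyy] at h2
    exact h2
end

section
/- Let ε = 1 or ε = −1, let a, b, c : ℝ² → ℝ be smooth functions of (y,t), let ξ : ℝ → ℝ be smooth, and let λ ∈ ℝ. If a smooth function u : ℝ³ → ℝ satisfies (u_t + u u_x + u_xxx)_x + ε u_yy + a(y,t) u_y + b(y,t) u_xy + c(y,t) u_xx = 0 at every point, then the function ũ(x,y,t) := u(x − λξ(t), y, t) + λξ′(t) satisfies the same equation at every point. -/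
/-- Smoothness of a function of two real variables. -/
def Smooth2 (a : ℝ → ℝ → ℝ) : Prop :=
  ContDiff ℝ (⊤ : ℕ∞) (fun p : ℝ × ℝ => a p.1 p.2)

/-- The CGKP equation with `f = 0`:
`(u_t + u u_x + u_xxx)_x + ε u_yy + a(y,t) u_y + b(y,t) u_xy + c(y,t) u_xx = 0`,
where `a, b, c` are functions of `(y, t)`. -/
def SolvesCGKP (ε : ℝ) (a b c : ℝ → ℝ → ℝ) (u : ℝ → ℝ → ℝ → ℝ) : Prop :=
  ∀ x y t : ℝ,
    px (fun x y t => pt u x y t + u x y t * px u x y t + px (px (px u)) x y t) x y t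
      + ε * py (py u) x y t + a y t * py u x y t + b y t * px (py u) x y t
      + c y t * px (px u) x y t = 0

section Aux

variable {u : ℝ → ℝ → ℝ → ℝ}

private lemma hasDerivAt_x' (hu : Smooth3 u) (x y t : ℝ) :
    HasDerivAt (fun s => u s y t)
      (fderiv ℝ (fun p : ℝ × ℝ × ℝ => u p.1 p.2.1 p.2.2) (x, (y, t)) (1, (0, 0))) x := by
  have hu' : ContDiff ℝ (⊤ : ℕ∞) (fun p : ℝ × ℝ × ℝ => u p.1 p.2.1 p.2.2) := hu
  have hγ : HasDerivAt (fun s : ℝ => ((s, (y, t)) : ℝ × ℝ × ℝ)) (1, (0, 0)) x :=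
    HasDerivAt.prodMk (hasDerivAt_id x) (hasDerivAt_const x (y, t))
  exact ((hu'.differentiable (by simp) (x, (y, t))).hasFDerivAt).comp_hasDerivAt x hγ

private lemma hasDerivAt_y' (hu : Smooth3 u) (x y t : ℝ) :
    HasDerivAt (fun s => u x s t)
      (fderiv ℝ (fun p : ℝ × ℝ × ℝ => u p.1 p.2.1 p.2.2) (x, (y, t)) (0, (1, 0))) y := by
  have hu' : ContDiff ℝ (⊤ : ℕ∞) (fun p : ℝ × ℝ × ℝ => u p.1 p.2.1 p.2.2) := hu
  have hγ : HasDerivAt (fun s : ℝ => ((x, (s, t)) : ℝ × ℝ × ℝ)) (0, (1, 0)) y :=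
    HasDerivAt.prodMk (hasDerivAt_const y x) (HasDerivAt.prodMk (hasDerivAt_id y) (hasDerivAt_const y t))
  exact ((hu'.differentiable (by simp) (x, (y, t))).hasFDerivAt).comp_hasDerivAt y hγ

private lemma hasDerivAt_t' (hu : Smooth3 u) (x y t : ℝ) :
    HasDerivAt (fun s => u x y s)
      (fderiv ℝ (fun p : ℝ × ℝ × ℝ => u p.1 p.2.1 p.2.2) (x, (y, t)) (0, (0, 1))) t := by
  have hu' : ContDiff ℝ (⊤ : ℕ∞) (fun p : ℝ × ℝ × ℝ => u p.1 p.2.1 p.2.2) := hu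
  have hγ : HasDerivAt (fun s : ℝ => ((x, (y, s)) : ℝ × ℝ × ℝ)) (0, (0, 1)) t :=
    HasDerivAt.prodMk (hasDerivAt_const t x) (HasDerivAt.prodMk (hasDerivAt_const t y) (hasDerivAt_id t))
  exact ((hu'.differentiable (by simp) (x, (y, t))).hasFDerivAt).comp_hasDerivAt t hγ

private lemma px_eq (hu : Smooth3 u) (x y t : ℝ) :
    px u x y t
      = fderiv ℝ (fun p : ℝ × ℝ × ℝ => u p.1 p.2.1 p.2.2) (x, (y, t)) (1, (0, 0)) :=
  (hasDerivAt_x' hu x y t).deriv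

private lemma py_eq (hu : Smooth3 u) (x y t : ℝ) :
    py u x y t
      = fderiv ℝ (fun p : ℝ × ℝ × ℝ => u p.1 p.2.1 p.2.2) (x, (y, t)) (0, (1, 0)) :=
  (hasDerivAt_y' hu x y t).deriv

private lemma pt_eq (hu : Smooth3 u) (x y t : ℝ) :
    pt u x y t
      = fderiv ℝ (fun p : ℝ × ℝ × ℝ => u p.1 p.2.1 p.2.2) (x, (y, t)) (0, (0, 1)) :=
  (hasDerivAt_t' hu x y t).deriv

private lemma hasDerivAt_px (hu : Smooth3 u) (x y t : ℝ) :
    HasDerivAt (fun s => u s y t) (px u x y t) x := by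
  rw [px_eq hu x y t]; exact hasDerivAt_x' hu x y t

private lemma smooth3_px (hu : Smooth3 u) : Smooth3 (px u) := by
  have hu' : ContDiff ℝ (⊤ : ℕ∞) (fun p : ℝ × ℝ × ℝ => u p.1 p.2.1 p.2.2) := hu
  have h1 : ContDiff ℝ (⊤ : ℕ∞) (fun p : ℝ × ℝ × ℝ =>
      fderiv ℝ (fun q : ℝ × ℝ × ℝ => u q.1 q.2.1 q.2.2) p (1, (0, 0))) :=
    (hu'.fderiv_right (by simp)).clm_apply contDiff_const
  have he : (fun p : ℝ × ℝ × ℝ => px u p.1 p.2.1 p.2.2)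
      = fun p : ℝ × ℝ × ℝ =>
        fderiv ℝ (fun q : ℝ × ℝ × ℝ => u q.1 q.2.1 q.2.2) p (1, (0, 0)) :=
    funext fun p => px_eq hu p.1 p.2.1 p.2.2
  show ContDiff ℝ (⊤ : ℕ∞) (fun p : ℝ × ℝ × ℝ => px u p.1 p.2.1 p.2.2)
  rw [he]; exact h1

private lemma smooth3_py (hu : Smooth3 u) : Smooth3 (py u) := by
  have hu' : ContDiff ℝ (⊤ : ℕ∞) (fun p : ℝ × ℝ × ℝ => u p.1 p.2.1 p.2.2) := hu
  have h1 : ContDiff ℝ (⊤ : ℕ∞) (fun p : ℝ × ℝ × ℝ =>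
      fderiv ℝ (fun q : ℝ × ℝ × ℝ => u q.1 q.2.1 q.2.2) p (0, (1, 0))) :=
    (hu'.fderiv_right (by simp)).clm_apply contDiff_const
  have he : (fun p : ℝ × ℝ × ℝ => py u p.1 p.2.1 p.2.2)
      = fun p : ℝ × ℝ × ℝ =>
        fderiv ℝ (fun q : ℝ × ℝ × ℝ => u q.1 q.2.1 q.2.2) p (0, (1, 0)) :=
    funext fun p => py_eq hu p.1 p.2.1 p.2.2
  show ContDiff ℝ (⊤ : ℕ∞) (fun p : ℝ × ℝ × ℝ => py u p.1 p.2.1 p.2.2)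
  rw [he]; exact h1

private lemma smooth3_pt (hu : Smooth3 u) : Smooth3 (pt u) := by
  have hu' : ContDiff ℝ (⊤ : ℕ∞) (fun p : ℝ × ℝ × ℝ => u p.1 p.2.1 p.2.2) := hu
  have h1 : ContDiff ℝ (⊤ : ℕ∞) (fun p : ℝ × ℝ × ℝ =>
      fderiv ℝ (fun q : ℝ × ℝ × ℝ => u q.1 q.2.1 q.2.2) p (0, (0, 1))) :=
    (hu'.fderiv_right (by simp)).clm_apply contDiff_const
  have he : (fun p : ℝ × ℝ × ℝ => pt u p.1 p.2.1 p.2.2)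
      = fun p : ℝ × ℝ × ℝ =>
        fderiv ℝ (fun q : ℝ × ℝ × ℝ => u q.1 q.2.1 q.2.2) p (0, (0, 1)) :=
    funext fun p => pt_eq hu p.1 p.2.1 p.2.2
  show ContDiff ℝ (⊤ : ℕ∞) (fun p : ℝ × ℝ × ℝ => pt u p.1 p.2.1 p.2.2)
  rw [he]; exact h1

private lemma deriv_shift (hu : Smooth3 u) (c x y t : ℝ) :
    deriv (fun s => u (s - c) y t) x = px u (x - c) y t := by
  have h := (hasDerivAt_px hu (x - c) y t).comp x ((hasDerivAt_id x).sub_const c)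
  have h2 := h.deriv
  rw [mul_one] at h2
  exact h2

private lemma deriv_shift_add (hu : Smooth3 u) (c K x y t : ℝ) :
    deriv (fun s => u (s - c) y t + K) x = px u (x - c) y t := by
  rw [deriv_add_const]
  exact deriv_shift hu c x y t

private lemma pt_shift (hu : Smooth3 u) {ξ : ℝ → ℝ} (hξ : ContDiff ℝ (⊤ : ℕ∞) ξ)
    (lam X Y T : ℝ) :
    HasDerivAt (fun s => u (X - lam * ξ s) Y s + lam * deriv ξ s)
      ((pt u (X - lam * ξ T) Y T - lam * deriv ξ T * px u (X - lam * ξ T) Y T)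
        + lam * deriv (deriv ξ) T) T := by
  have hu' : ContDiff ℝ (⊤ : ℕ∞) (fun p : ℝ × ℝ × ℝ => u p.1 p.2.1 p.2.2) := hu
  have hξd : Differentiable ℝ ξ := hξ.differentiable (by simp)
  have hξ2 : Differentiable ℝ (deriv ξ) := by
    have h1 : ContDiff ℝ (⊤ : ℕ∞) (fderiv ℝ ξ) := hξ.fderiv_right (by simp)
    have h2 : ContDiff ℝ (⊤ : ℕ∞) (fun s => fderiv ℝ ξ s 1) := h1.clm_apply contDiff_const
    have h3 : deriv ξ = fun s => fderiv ℝ ξ s 1 := rfl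
    rw [h3]
    exact h2.differentiable (by simp)
  have h1 : HasDerivAt (fun s => X - lam * ξ s) (-(lam * deriv ξ T)) T :=
    HasDerivAt.const_sub X (HasDerivAt.const_mul lam (hξd T).hasDerivAt)
  have hγ : HasDerivAt (fun s : ℝ => ((X - lam * ξ s, (Y, s)) : ℝ × ℝ × ℝ))
      (-(lam * deriv ξ T), (0, 1)) T :=
    HasDerivAt.prodMk h1 (HasDerivAt.prodMk (hasDerivAt_const T Y) (hasDerivAt_id T))
  have h2 := ((hu'.differentiable (by simp) (X - lam * ξ T, (Y, T))).hasFDerivAt).comp_hasDerivAt T hγ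
  have hvec : ((-(lam * deriv ξ T), ((0 : ℝ), (1 : ℝ))) : ℝ × ℝ × ℝ)
      = (-(lam * deriv ξ T)) • ((1 : ℝ), ((0 : ℝ), (0 : ℝ))) + ((0 : ℝ), ((0 : ℝ), (1 : ℝ))) := by
    simp
  have hval : fderiv ℝ (fun p : ℝ × ℝ × ℝ => u p.1 p.2.1 p.2.2)
      (X - lam * ξ T, (Y, T)) (-(lam * deriv ξ T), (0, 1))
      = pt u (X - lam * ξ T) Y T - lam * deriv ξ T * px u (X - lam * ξ T) Y T := by
    rw [hvec, map_add, map_smul, ← px_eq hu, ← pt_eq hu]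
    simp [smul_eq_mul]
    ring
  rw [hval] at h2
  have h3 : HasDerivAt (fun s => lam * deriv ξ s) (lam * deriv (deriv ξ) T) T :=
    HasDerivAt.const_mul lam (hξ2 T).hasDerivAt
  exact h2.add h3

end Aux

/-- the flow of the symmetry `X(ξ) = ξ(t)∂_x + ξ′(t)∂_u` maps solutions
of the CGKP equation (with `f = 0`) to solutions. -/
theorem stmt1 (ε : ℝ) (hε : ε = 1 ∨ ε = -1)
    (a b c : ℝ → ℝ → ℝ) (ha : Smooth2 a) (hb : Smooth2 b) (hc : Smooth2 c)
    (ξ : ℝ → ℝ) (hξ : ContDiff ℝ (⊤ : ℕ∞) ξ) (lam : ℝ)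
    (u : ℝ → ℝ → ℝ → ℝ) (hu : Smooth3 u)
    (hsol : SolvesCGKP ε a b c u)
    (v : ℝ → ℝ → ℝ → ℝ)
    (hv : v = fun x y t => u (x - lam * ξ t) y t + lam * deriv ξ t) :
    SolvesCGKP ε a b c v := by
  intro x y t
  have hveq : ∀ X Y T : ℝ, v X Y T = u (X - lam * ξ T) Y T + lam * deriv ξ T :=
    fun X Y T => by rw [hv]
  -- first x-derivative
  have hpx : ∀ X Y T : ℝ, px v X Y T = px u (X - lam * ξ T) Y T := by
    intro X Y T
    show deriv (fun s => v s Y T) X = _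
    rw [show (fun s => v s Y T) = fun s => u (s - lam * ξ T) Y T + lam * deriv ξ T from
      funext fun s => hveq s Y T]
    exact deriv_shift_add hu _ _ _ _ _
  -- first y-derivative
  have hpy : ∀ X Y T : ℝ, py v X Y T = py u (X - lam * ξ T) Y T := by
    intro X Y T
    show deriv (fun s => v X s T) Y = _
    rw [show (fun s => v X s T) = fun s => u (X - lam * ξ T) s T + lam * deriv ξ T from
      funext fun s => hveq X s T]
    rw [deriv_add_const]
    rfl
  -- t-derivative
  have hpt : ∀ X Y T : ℝ, pt v X Y T
      = (pt u (X - lam * ξ T) Y T - lam * deriv ξ T * px u (X - lam * ξ T) Y T)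
        + lam * deriv (deriv ξ) T := by
    intro X Y T
    show deriv (fun s => v X Y s) T = _
    rw [show (fun s => v X Y s) = fun s => u (X - lam * ξ s) Y s + lam * deriv ξ s from
      funext fun s => hveq X Y s]
    exact (pt_shift hu hξ lam X Y T).deriv
  -- second x-derivative
  have hpxx : ∀ X Y T : ℝ, px (px v) X Y T = px (px u) (X - lam * ξ T) Y T := by
    intro X Y T
    show deriv (fun s => px v s Y T) X = _
    rw [show (fun s => px v s Y T) = fun s => px u (s - lam * ξ T) Y T from
      funext fun s => hpx s Y T]
    exact deriv_shift (smooth3_px hu) _ _ _ _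
  -- third x-derivative
  have hpxxx : ∀ X Y T : ℝ,
      px (px (px v)) X Y T = px (px (px u)) (X - lam * ξ T) Y T := by
    intro X Y T
    show deriv (fun s => px (px v) s Y T) X = _
    rw [show (fun s => px (px v) s Y T) = fun s => px (px u) (s - lam * ξ T) Y T from
      funext fun s => hpxx s Y T]
    exact deriv_shift (smooth3_px (smooth3_px hu)) _ _ _ _
  -- mixed xy-derivative
  have hpxy : px (py v) x y t = px (py u) (x - lam * ξ t) y t := by
    show deriv (fun s => py v s y t) x = _
    rw [show (fun s => py v s y t) = fun s => py u (s - lam * ξ t) y t from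
      funext fun s => hpy s y t]
    exact deriv_shift (smooth3_py hu) _ _ _ _
  -- second y-derivative
  have hpyy : py (py v) x y t = py (py u) (x - lam * ξ t) y t := by
    show deriv (fun s => py v x s t) y = _
    rw [show (fun s => py v x s t) = fun s => py u (x - lam * ξ t) s t from
      funext fun s => hpy x s t]
    rfl
  -- smoothness of the inner expression
  have hI : Smooth3 (fun X Y T =>
      pt u X Y T + u X Y T * px u X Y T + px (px (px u)) X Y T) := by
    show ContDiff ℝ (⊤ : ℕ∞) (fun p : ℝ × ℝ × ℝ =>
      pt u p.1 p.2.1 p.2.2 + u p.1 p.2.1 p.2.2 * px u p.1 p.2.1 p.2.2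
        + px (px (px u)) p.1 p.2.1 p.2.2)
    have h1 : ContDiff ℝ (⊤ : ℕ∞) (fun p : ℝ × ℝ × ℝ => pt u p.1 p.2.1 p.2.2) := smooth3_pt hu
    have h2 : ContDiff ℝ (⊤ : ℕ∞) (fun p : ℝ × ℝ × ℝ => u p.1 p.2.1 p.2.2) := hu
    have h3 : ContDiff ℝ (⊤ : ℕ∞) (fun p : ℝ × ℝ × ℝ => px u p.1 p.2.1 p.2.2) := smooth3_px hu
    have h4 : ContDiff ℝ (⊤ : ℕ∞) (fun p : ℝ × ℝ × ℝ => px (px (px u)) p.1 p.2.1 p.2.2) :=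
      smooth3_px (smooth3_px (smooth3_px hu))
    exact (h1.add (h2.mul h3)).add h4
  -- the inner expression for v equals the shifted inner expression for u plus a constant
  have hW : (fun s => pt v s y t + v s y t * px v s y t + px (px (px v)) s y t)
      = fun s => (pt u (s - lam * ξ t) y t
          + u (s - lam * ξ t) y t * px u (s - lam * ξ t) y t
          + px (px (px u)) (s - lam * ξ t) y t) + lam * deriv (deriv ξ) t := by
    funext s
    rw [hpt s y t, hpx s y t, hpxxx s y t, hveq s y t]
    ring
  -- the first term
  have e1 : px (fun X Y T => pt v X Y T + v X Y T * px v X Y T + px (px (px v)) X Y T) x y t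
      = px (fun X Y T => pt u X Y T + u X Y T * px u X Y T + px (px (px u)) X Y T)
          (x - lam * ξ t) y t := by
    show deriv (fun s => pt v s y t + v s y t * px v s y t + px (px (px v)) s y t) x = _
    rw [hW]
    exact deriv_shift_add hI (lam * ξ t) (lam * deriv (deriv ξ) t) x y t
  rw [e1, hpyy, hpy x y t, hpxy, hpxx x y t]
  exact hsol (x - lam * ξ t) y t
end

section
/- Let ε = 1 or ε = −1 and let b₀, b₁, c₁, c₂ : ℝ → ℝ be smooth. For smooth ξ, η : ℝ → ℝ define vector fields on ℝ⁴ by X(ξ)(x,y,t,u) = (ξ(t), 0, 0, ξ′(t)) and Y(η)(x,y,t,u) = ( (ε/2)y(b₁(t)η(t) − η′(t)), η(t), 0, [−2c₂(t)η(t) + (ε/2)(−η″(t) + b₁′(t)η(t) + b₁(t)²η(t))]y − c₁(t)η(t) + (ε/2)b₀(t)(b₁(t)η(t) − η′(t)) ). Then the Lie bracket [X(ξ), Y(η)] is identically zero. -/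
/-- The vector field `X(ξ) = ξ(t)∂_x + ξ′(t)∂_u` on ℝ⁴ with coordinates `(x, y, t, u)`. -/
noncomputable def X (ξ : ℝ → ℝ) (p : ℝ × ℝ × ℝ × ℝ) : ℝ × ℝ × ℝ × ℝ :=
  (ξ p.2.2.1, 0, 0, deriv ξ p.2.2.1)

/-- The Kac–Moody generator `Y(η)` of equation (5.10), as a vector field on ℝ⁴
with coordinates `(x, y, t, u)`. -/
noncomputable def Y (ε : ℝ) (b₀ b₁ c₁ c₂ : ℝ → ℝ) (η : ℝ → ℝ)
    (p : ℝ × ℝ × ℝ × ℝ) : ℝ × ℝ × ℝ × ℝ :=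
  (ε / 2 * p.2.1 * (b₁ p.2.2.1 * η p.2.2.1 - deriv η p.2.2.1),
   η p.2.2.1,
   0,
   (-2 * c₂ p.2.2.1 * η p.2.2.1
      + ε / 2 * (-(deriv (deriv η) p.2.2.1) + deriv b₁ p.2.2.1 * η p.2.2.1
        + (b₁ p.2.2.1) ^ 2 * η p.2.2.1)) * p.2.1
     - c₁ p.2.2.1 * η p.2.2.1
     + ε / 2 * b₀ p.2.2.1 * (b₁ p.2.2.1 * η p.2.2.1 - deriv η p.2.2.1))

/-- the Lie bracket `[X(ξ), Y(η)]` vanishes identically. -/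
theorem stmt4 (ε : ℝ) (hε : ε = 1 ∨ ε = -1)
    (b₀ b₁ c₁ c₂ : ℝ → ℝ) (hb₀ : ContDiff ℝ (⊤ : ℕ∞) b₀) (hb₁ : ContDiff ℝ (⊤ : ℕ∞) b₁)
    (hc₁ : ContDiff ℝ (⊤ : ℕ∞) c₁) (hc₂ : ContDiff ℝ (⊤ : ℕ∞) c₂)
    (ξ η : ℝ → ℝ) (hξ : ContDiff ℝ (⊤ : ℕ∞) ξ) (hη : ContDiff ℝ (⊤ : ℕ∞) η) :
    ∀ p : ℝ × ℝ × ℝ × ℝ,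
      VectorField.lieBracket ℝ (X ξ) (Y ε b₀ b₁ c₁ c₂ η) p = 0 := by
  intro p
  have hξd : Differentiable ℝ ξ := hξ.differentiable (by simp)
  have hηd : Differentiable ℝ η := hη.differentiable (by simp)
  have hb₁d : Differentiable ℝ b₁ := hb₁.differentiable (by simp)
  have hb₀d : Differentiable ℝ b₀ := hb₀.differentiable (by simp)
  have hc₁d : Differentiable ℝ c₁ := hc₁.differentiable (by simp)
  have hc₂d : Differentiable ℝ c₂ := hc₂.differentiable (by simp)
  have hξ' : Differentiable ℝ (deriv ξ) :=
    ((contDiff_infty_iff_deriv.mp (hξ.of_le (by simp))).2).differentiable (by simp)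
  have hη'c : ContDiff ℝ ((⊤ : ℕ∞) : WithTop ℕ∞) (deriv η) := (contDiff_infty_iff_deriv.mp (hη.of_le (by simp))).2
  have hη' : Differentiable ℝ (deriv η) := hη'c.differentiable (by simp)
  have hη'' : Differentiable ℝ (deriv (deriv η)) :=
    ((contDiff_infty_iff_deriv.mp hη'c).2).differentiable (by simp)
  have hb₁' : Differentiable ℝ (deriv b₁) :=
    ((contDiff_infty_iff_deriv.mp (hb₁.of_le (by simp))).2).differentiable (by simp)
  set t := p.2.2.1 with ht
  -- linear projections
  set L : (ℝ × ℝ × ℝ × ℝ) →L[ℝ] ℝ :=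
    (ContinuousLinearMap.fst ℝ ℝ ℝ).comp ((ContinuousLinearMap.snd ℝ ℝ (ℝ × ℝ)).comp
      (ContinuousLinearMap.snd ℝ ℝ (ℝ × ℝ × ℝ))) with hL
  set h : (ℝ × ℝ × ℝ × ℝ) →L[ℝ] ℝ × ℝ :=
    ((ContinuousLinearMap.fst ℝ ℝ (ℝ × ℝ)).comp
      (ContinuousLinearMap.snd ℝ ℝ (ℝ × ℝ × ℝ))).prod L with hh
  set F : ℝ → ℝ × ℝ × ℝ × ℝ := fun s => (ξ s, (0:ℝ), (0:ℝ), deriv ξ s) with hF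
  set G : ℝ × ℝ → ℝ × ℝ × ℝ × ℝ := fun q =>
    (ε / 2 * q.1 * (b₁ q.2 * η q.2 - deriv η q.2),
     η q.2, (0:ℝ),
     (-2 * c₂ q.2 * η q.2
        + ε / 2 * (-(deriv (deriv η) q.2) + deriv b₁ q.2 * η q.2
          + (b₁ q.2) ^ 2 * η q.2)) * q.1
       - c₁ q.2 * η q.2
       + ε / 2 * b₀ q.2 * (b₁ q.2 * η q.2 - deriv η q.2)) with hG
  have hFd : DifferentiableAt ℝ F t := by
    apply DifferentiableAt.prodMk (hξd t) (DifferentiableAt.prodMk (by fun_prop)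
      (DifferentiableAt.prodMk (by fun_prop) (hξ' t)))
  have hGd : DifferentiableAt ℝ G (p.2.1, t) := by fun_prop
  have hX : HasFDerivAt (X ξ) ((fderiv ℝ F t).comp L) p :=
    by have := HasFDerivAt.comp p hFd.hasFDerivAt L.hasFDerivAt; exact this
  have hY : HasFDerivAt (Y ε b₀ b₁ c₁ c₂ η) ((fderiv ℝ G (p.2.1, t)).comp h) p :=
    by have := HasFDerivAt.comp p hGd.hasFDerivAt h.hasFDerivAt; exact this
  rw [VectorField.lieBracket, hX.fderiv, hY.fderiv]
  have e1 : L (Y ε b₀ b₁ c₁ c₂ η p) = 0 := by simp [hL, Y]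
  have e2 : h (X ξ p) = 0 := by simp [hh, hL, X, Prod.ext_iff]
  simp [ContinuousLinearMap.comp_apply, e1, e2]
end

section
/- Let ε = 1 or ε = −1, let b, c₀, c₁ : ℝ → ℝ be smooth, and let τ : ℝ → ℝ be smooth. Suppose the smooth function u : ℝ³ → ℝ satisfies (u_t + u u_x + u_xxx)_x + ε u_yy + b(t) u_xy + (c₀(t) + c₁(t)y) u_xx = 0 at every point. Define ξ_T(x,y,t) := (1/6)(3εb′(t)yτ(t) + (2x + εb(t)y)τ′(t) − ετ″(t)y²), η_T(y,t) := (2/3)τ′(t)y, and φ_T(x,y,t,u) := (1/6){ [−6c₀′(t) + 3εb(t)b′(t) + (−6c₁′(t) + 3εb″(t))y]τ(t) + [−4u + εb(t)² − 4c₀(t) + 4(εb′(t) − 2c₁(t))y]τ′(t) + (2x − εb(t)y)τ″(t) − εy²τ′″(t) }. Define the characteristic Q(x,y,t) := φ_T(x,y,t,u(x,y,t)) − ξ_T(x,y,t)·u_x(x,y,t) − η_T(y,t)·u_y(x,y,t) − τ(t)·u_t(x,y,t). Then Q satisfies the linearized equation at u: (Q_t + (uQ)_x + Q_xxx)_x +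 ε Q_yy + b(t) Q_xy + (c₀(t) + c₁(t)y) Q_xx = 0 at every point. -/
/-- `Q` solves the linearization of equation (4.11) at `u`. -/
def SolvesLinGKP (ε : ℝ) (b c₀ c₁ : ℝ → ℝ) (u Q : ℝ → ℝ → ℝ → ℝ) : Prop :=
  ∀ x y t : ℝ,
    px (fun x y t => pt Q x y t + px (fun x y t => u x y t * Q x y t) x y t
        + px (px (px Q)) x y t) x y t
      + ε * py (py Q) x y t + b t * px (py Q) x y t
      + (c₀ t + c₁ t * y) * px (px Q) x y t = 0

namespace KP
variable {f g : ℝ → ℝ → ℝ → ℝ}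

def U3 (f : ℝ → ℝ → ℝ → ℝ) : ℝ × ℝ × ℝ → ℝ := fun p => f p.1 p.2.1 p.2.2

lemma s3u3 (hf : Smooth3 f) : ContDiff ℝ (⊤ : ℕ∞) (U3 f) := hf

lemma s3sx (hf : Smooth3 f) (y t : ℝ) : ContDiff ℝ (⊤ : ℕ∞) (fun s => f s y t) :=
  hf.comp ((contDiff_id.prodMk contDiff_const : ContDiff ℝ (⊤ : ℕ∞) (fun s : ℝ => (s, (y, t)))))
lemma s3sy (hf : Smooth3 f) (x t : ℝ) : ContDiff ℝ (⊤ : ℕ∞) (fun s => f x s t) :=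
  hf.comp ((contDiff_const.prodMk (contDiff_id.prodMk contDiff_const) :
    ContDiff ℝ (⊤ : ℕ∞) (fun s : ℝ => (x, (s, t)))))
lemma s3st (hf : Smooth3 f) (x y : ℝ) : ContDiff ℝ (⊤ : ℕ∞) (fun s => f x y s) :=
  hf.comp ((contDiff_const.prodMk (contDiff_const.prodMk contDiff_id) :
    ContDiff ℝ (⊤ : ℕ∞) (fun s : ℝ => (x, (y, s)))))

lemma s3dx (hf : Smooth3 f) (x y t : ℝ) : DifferentiableAt ℝ (fun s => f s y t) x :=
  ((s3sx hf y t).differentiable (by simp)).differentiableAt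
lemma s3dy (hf : Smooth3 f) (x y t : ℝ) : DifferentiableAt ℝ (fun s => f x s t) y :=
  ((s3sy hf x t).differentiable (by simp)).differentiableAt
lemma s3dt (hf : Smooth3 f) (x y t : ℝ) : DifferentiableAt ℝ (fun s => f x y s) t :=
  ((s3st hf x y).differentiable (by simp)).differentiableAt

-- structural lemmas
lemma px_add (hf : Smooth3 f) (hg : Smooth3 g) :
    px (fun x y t => f x y t + g x y t) = fun x y t => px f x y t + px g x y t := by
  funext x y t; exact deriv_add (s3dx hf x y t) (s3dx hg x y t)
lemma py_add (hf : Smooth3 f) (hg : Smooth3 g) :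
    py (fun x y t => f x y t + g x y t) = fun x y t => py f x y t + py g x y t := by
  funext x y t; exact deriv_add (s3dy hf x y t) (s3dy hg x y t)
lemma pt_add (hf : Smooth3 f) (hg : Smooth3 g) :
    pt (fun x y t => f x y t + g x y t) = fun x y t => pt f x y t + pt g x y t := by
  funext x y t; exact deriv_add (s3dt hf x y t) (s3dt hg x y t)
lemma px_sub (hf : Smooth3 f) (hg : Smooth3 g) :
    px (fun x y t => f x y t - g x y t) = fun x y t => px f x y t - px g x y t := by
  funext x y t; exact deriv_sub (s3dx hf x y t) (s3dx hg x y t)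
lemma py_sub (hf : Smooth3 f) (hg : Smooth3 g) :
    py (fun x y t => f x y t - g x y t) = fun x y t => py f x y t - py g x y t := by
  funext x y t; exact deriv_sub (s3dy hf x y t) (s3dy hg x y t)
lemma pt_sub (hf : Smooth3 f) (hg : Smooth3 g) :
    pt (fun x y t => f x y t - g x y t) = fun x y t => pt f x y t - pt g x y t := by
  funext x y t; exact deriv_sub (s3dt hf x y t) (s3dt hg x y t)
lemma px_mul (hf : Smooth3 f) (hg : Smooth3 g) :
    px (fun x y t => f x y t * g x y t)
      = fun x y t => px f x y t * g x y t + f x y t * px g x y t := by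
  funext x y t; exact deriv_mul (s3dx hf x y t) (s3dx hg x y t)
lemma py_mul (hf : Smooth3 f) (hg : Smooth3 g) :
    py (fun x y t => f x y t * g x y t)
      = fun x y t => py f x y t * g x y t + f x y t * py g x y t := by
  funext x y t; exact deriv_mul (s3dy hf x y t) (s3dy hg x y t)
lemma pt_mul (hf : Smooth3 f) (hg : Smooth3 g) :
    pt (fun x y t => f x y t * g x y t)
      = fun x y t => pt f x y t * g x y t + f x y t * pt g x y t := by
  funext x y t; exact deriv_mul (s3dt hf x y t) (s3dt hg x y t)

lemma px_neg : px (fun x y t => -f x y t) = fun x y t => -px f x y t := by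
  funext x y t
  exact deriv.neg (f := fun s => f s y t) (x := x)
lemma py_neg : py (fun x y t => -f x y t) = fun x y t => -py f x y t := by
  funext x y t
  exact deriv.neg (f := fun s => f x s t) (x := y)
lemma pt_neg : pt (fun x y t => -f x y t) = fun x y t => -pt f x y t := by
  funext x y t
  exact deriv.neg (f := fun s => f x y s) (x := t)
lemma smooth3_neg (hf : Smooth3 f) : Smooth3 (fun x y t => -f x y t) := ContDiff.neg hf

-- unconditional lemmas
lemma px_indep (g : ℝ → ℝ → ℝ) : px (fun _ y t => g y t) = fun _ _ _ => 0 := by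
  funext x y t; exact deriv_const x (g y t)
lemma py_indep (g : ℝ → ℝ → ℝ) : py (fun x _ t => g x t) = fun _ _ _ => 0 := by
  funext x y t; exact deriv_const y (g x t)
lemma pt_indep (g : ℝ → ℝ → ℝ) : pt (fun x y _ => g x y) = fun _ _ _ => 0 := by
  funext x y t; exact deriv_const t (g x y)
lemma px_x : px (fun x _ _ => x) = fun _ _ _ => 1 := by
  funext x y t; exact deriv_id x
lemma py_y : py (fun _ y _ => y) = fun _ _ _ => 1 := by
  funext x y t; exact deriv_id y
lemma pt_tf (g : ℝ → ℝ) : pt (fun _ _ s => g s) = fun _ _ t => deriv g t := rfl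

-- smoothness closure
lemma smooth3_const (c : ℝ) : Smooth3 (fun _ _ _ => c) := contDiff_const
lemma smooth3_x : Smooth3 (fun x _ _ => x) := contDiff_fst
lemma smooth3_y : Smooth3 (fun _ y _ => y) := contDiff_snd.fst
lemma smooth3_tf {g : ℝ → ℝ} (hg : ContDiff ℝ (⊤ : ℕ∞) g) : Smooth3 (fun _ _ t => g t) :=
  hg.comp contDiff_snd.snd
lemma smooth3_add (hf : Smooth3 f) (hg : Smooth3 g) :
    Smooth3 (fun x y t => f x y t + g x y t) := ContDiff.add hf hg
lemma smooth3_sub (hf : Smooth3 f) (hg : Smooth3 g) :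
    Smooth3 (fun x y t => f x y t - g x y t) := ContDiff.sub hf hg
lemma smooth3_mul (hf : Smooth3 f) (hg : Smooth3 g) :
    Smooth3 (fun x y t => f x y t * g x y t) := ContDiff.mul hf hg
lemma contDiff_deriv {g : ℝ → ℝ} (hg : ContDiff ℝ (⊤ : ℕ∞) g) : ContDiff ℝ (⊤ : ℕ∞) (deriv g) := by
  have h := (hg.fderiv_right (m := (⊤ : ℕ∞)) (by simp)).clm_apply (contDiff_const (c := (1:ℝ)))
  have he : deriv g = fun x => fderiv ℝ g x 1 := by
    funext x; rw [fderiv_apply_one_eq_deriv]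
  rw [he]; exact h

-- fderiv representation
lemma px_eq (hf : Smooth3 f) (x y t : ℝ) :
    px f x y t = fderiv ℝ (U3 f) (x, y, t) (1, 0, 0) := by
  have h1 : HasDerivAt (fun s : ℝ => ((s, (y, t)) : ℝ × ℝ × ℝ)) ((1, (0, 0)) : ℝ × ℝ × ℝ) x :=
    (hasDerivAt_id x).prodMk (hasDerivAt_const x (y, t))
  have h2 := (((s3u3 hf).differentiable (by simp)) (x, y, t)).hasFDerivAt
  exact (h2.comp_hasDerivAt x h1).deriv
lemma py_eq (hf : Smooth3 f) (x y t : ℝ) :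
    py f x y t = fderiv ℝ (U3 f) (x, y, t) (0, 1, 0) := by
  have h1 : HasDerivAt (fun s : ℝ => ((x, (s, t)) : ℝ × ℝ × ℝ)) ((0, (1, 0)) : ℝ × ℝ × ℝ) y :=
    (hasDerivAt_const y x).prodMk ((hasDerivAt_id y).prodMk (hasDerivAt_const y t))
  have h2 := (((s3u3 hf).differentiable (by simp)) (x, y, t)).hasFDerivAt
  exact (h2.comp_hasDerivAt y h1).deriv
lemma pt_eq (hf : Smooth3 f) (x y t : ℝ) :
    pt f x y t = fderiv ℝ (U3 f) (x, y, t) (0, 0, 1) := by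
  have h1 : HasDerivAt (fun s : ℝ => ((x, (y, s)) : ℝ × ℝ × ℝ)) ((0, (0, 1)) : ℝ × ℝ × ℝ) t :=
    (hasDerivAt_const t x).prodMk ((hasDerivAt_const t y).prodMk (hasDerivAt_id t))
  have h2 := (((s3u3 hf).differentiable (by simp)) (x, y, t)).hasFDerivAt
  exact (h2.comp_hasDerivAt t h1).deriv

lemma smooth3_pd (hf : Smooth3 f) (v : ℝ × ℝ × ℝ) :
    ContDiff ℝ (⊤ : ℕ∞) (fun p : ℝ × ℝ × ℝ => fderiv ℝ (U3 f) p v) :=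
  ((s3u3 hf).fderiv_right (by simp)).clm_apply contDiff_const

lemma smooth3_px (hf : Smooth3 f) : Smooth3 (px f) := by
  have h : (fun p : ℝ × ℝ × ℝ => px f p.1 p.2.1 p.2.2)
      = fun p => fderiv ℝ (U3 f) p (1, 0, 0) := by
    funext p; exact px_eq hf p.1 p.2.1 p.2.2
  unfold Smooth3; rw [h]; exact smooth3_pd hf _
lemma smooth3_py (hf : Smooth3 f) : Smooth3 (py f) := by
  have h : (fun p : ℝ × ℝ × ℝ => py f p.1 p.2.1 p.2.2)
      = fun p => fderiv ℝ (U3 f) p (0, 1, 0) := by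
    funext p; exact py_eq hf p.1 p.2.1 p.2.2
  unfold Smooth3; rw [h]; exact smooth3_pd hf _
lemma smooth3_pt (hf : Smooth3 f) : Smooth3 (pt f) := by
  have h : (fun p : ℝ × ℝ × ℝ => pt f p.1 p.2.1 p.2.2)
      = fun p => fderiv ℝ (U3 f) p (0, 0, 1) := by
    funext p; exact pt_eq hf p.1 p.2.1 p.2.2
  unfold Smooth3; rw [h]; exact smooth3_pd hf _

lemma U3_px (hf : Smooth3 f) : U3 (px f) = fun p => fderiv ℝ (U3 f) p (1, 0, 0) := by
  funext p; exact px_eq hf p.1 p.2.1 p.2.2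
lemma U3_py (hf : Smooth3 f) : U3 (py f) = fun p => fderiv ℝ (U3 f) p (0, 1, 0) := by
  funext p; exact py_eq hf p.1 p.2.1 p.2.2
lemma U3_pt (hf : Smooth3 f) : U3 (pt f) = fun p => fderiv ℝ (U3 f) p (0, 0, 1) := by
  funext p; exact pt_eq hf p.1 p.2.1 p.2.2

lemma pd_comm (hf : Smooth3 f) (p v w : ℝ × ℝ × ℝ) :
    fderiv ℝ (fun q => fderiv ℝ (U3 f) q w) p v
      = fderiv ℝ (fun q => fderiv ℝ (U3 f) q v) p w := by
  have hd : DifferentiableAt ℝ (fderiv ℝ (U3 f)) p :=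
    (((s3u3 hf).fderiv_right (m := (⊤ : ℕ∞)) (by simp)).differentiable (by simp)).differentiableAt
  have key : ∀ z : ℝ × ℝ × ℝ, fderiv ℝ (fun q => fderiv ℝ (U3 f) q z) p
      = (ContinuousLinearMap.apply ℝ ℝ z).comp (fderiv ℝ (fderiv ℝ (U3 f)) p) := by
    intro z
    have h : HasFDerivAt (fun q => fderiv ℝ (U3 f) q z)
        ((ContinuousLinearMap.apply ℝ ℝ z).comp (fderiv ℝ (fderiv ℝ (U3 f)) p)) p :=
      (ContinuousLinearMap.apply ℝ ℝ z).hasFDerivAt.comp p hd.hasFDerivAt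
    exact h.fderiv
  rw [key w, key v]
  exact second_derivative_symmetric
    (fun q => (((s3u3 hf).differentiable (by simp)) q).hasFDerivAt) hd.hasFDerivAt v w

lemma px_py (hf : Smooth3 f) : px (py f) = py (px f) := by
  funext x y t
  rw [px_eq (smooth3_py hf) x y t, py_eq (smooth3_px hf) x y t, U3_py hf, U3_px hf,
    pd_comm hf]
lemma px_pt (hf : Smooth3 f) : px (pt f) = pt (px f) := by
  funext x y t
  rw [px_eq (smooth3_pt hf) x y t, pt_eq (smooth3_px hf) x y t, U3_pt hf, U3_px hf,
    pd_comm hf]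
lemma py_pt (hf : Smooth3 f) : py (pt f) = pt (py f) := by
  funext x y t
  rw [py_eq (smooth3_pt hf) x y t, pt_eq (smooth3_py hf) x y t, U3_pt hf, U3_py hf,
    pd_comm hf]

end KP


set_option maxHeartbeats 4000000 in
/-- the evolutionary characteristic of the Virasoro generator `T(τ)` of
equation (4.13) solves the linearized equation along every solution of (4.11). -/
theorem stmt9 (ε : ℝ) (hε : ε = 1 ∨ ε = -1)
    (b c₀ c₁ : ℝ → ℝ) (hb : ContDiff ℝ (⊤ : ℕ∞) b) (hc₀ : ContDiff ℝ (⊤ : ℕ∞) c₀) (hc₁ : ContDiff ℝ (⊤ : ℕ∞) c₁)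
    (τ : ℝ → ℝ) (hτ : ContDiff ℝ (⊤ : ℕ∞) τ)
    (u : ℝ → ℝ → ℝ → ℝ) (hu : Smooth3 u) (hsol : SolvesGKP ε b c₀ c₁ u)
    (ξT ηT φT : ℝ → ℝ → ℝ → ℝ)
    (hξT : ξT = fun x y t => 1 / 6 * (3 * ε * deriv b t * y * τ t
        + (2 * x + ε * b t * y) * deriv τ t - ε * deriv (deriv τ) t * y ^ 2))
    (hηT : ηT = fun _ y t => 2 / 3 * deriv τ t * y)
    (hφT : φT = fun x y t => 1 / 6 *
      ((-6 * deriv c₀ t + 3 * ε * b t * deriv b t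
          + (-6 * deriv c₁ t + 3 * ε * deriv (deriv b) t) * y) * τ t
        + (-4 * u x y t + ε * (b t) ^ 2 - 4 * c₀ t
          + 4 * (ε * deriv b t - 2 * c₁ t) * y) * deriv τ t
        + (2 * x - ε * b t * y) * deriv (deriv τ) t
        - ε * y ^ 2 * deriv (deriv (deriv τ)) t))
    (Q : ℝ → ℝ → ℝ → ℝ)
    (hQ : Q = fun x y t => φT x y t - ξT x y t * px u x y t - ηT x y t * py u x y t
        - τ t * pt u x y t) :
    SolvesLinGKP ε b c₀ c₁ u Q := by
  subst hQ hξT hηT hφT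
  unfold SolvesLinGKP
  intro x y t
  have hε2 : ε * ε = 1 := by rcases hε with rfl | rfl <;> norm_num
  have hE : (fun (X Y T : ℝ) =>
      px (fun x y t => pt u x y t + u x y t * px u x y t + px (px (px u)) x y t) X Y T
        + ε * py (py u) X Y T + b T * px (py u) X Y T
        + (c₀ T + c₁ T * Y) * px (px u) X Y T) = fun _ _ _ => (0:ℝ) := by
    funext X Y T; exact hsol X Y T
  have h1 := hsol x y t
  have hRx := congrFun (congrFun (congrFun (congrArg px hE) x) y) t
  have hRy := congrFun (congrFun (congrFun (congrArg py hE) x) y) t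
  have hRt := congrFun (congrFun (congrFun (congrArg pt hE) x) y) t
  simp only [pow_two] at h1 hRx hRy hRt ⊢
  simp (config := { maxDischargeDepth := 100, maxSteps := 10000000 }) [KP.px_neg, KP.py_neg, KP.pt_neg, KP.smooth3_neg, KP.px_add, KP.py_add, KP.pt_add, KP.px_sub, KP.py_sub, KP.pt_sub,
      KP.px_mul, KP.py_mul, KP.pt_mul, KP.px_indep, KP.py_indep, KP.pt_indep,
      KP.px_x, KP.py_y, KP.pt_tf b, KP.pt_tf (deriv b), KP.pt_tf (deriv (deriv b)),
      KP.pt_tf c₀, KP.pt_tf (deriv c₀), KP.pt_tf c₁, KP.pt_tf (deriv c₁),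
      KP.pt_tf τ, KP.pt_tf (deriv τ), KP.pt_tf (deriv (deriv τ)),
      KP.pt_tf (deriv (deriv (deriv τ))),
      KP.px_py, KP.px_pt, KP.py_pt,
      KP.smooth3_add, KP.smooth3_sub, KP.smooth3_mul, KP.smooth3_const,
      KP.smooth3_x, KP.smooth3_y, KP.smooth3_tf,
      KP.smooth3_px, KP.smooth3_py, KP.smooth3_pt, KP.contDiff_deriv,
      hu, hb, hc₀, hc₁, hτ, ContDiff.mul, ContDiff.add, ContDiff.sub, contDiff_const]
    at h1 hRx hRy hRt ⊢
  linear_combination (norm := ring_nf)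
    (-2 * deriv τ t) * h1
    - (1/6*(3*ε*deriv b t*y*τ t + (2*x + ε*b t*y)*deriv τ t
        - ε*deriv (deriv τ) t*(y*y))) * hRx
    - (2/3 * deriv τ t * y) * hRy - τ t * hRt
    + ((-1/3 : ℝ) * (b t) * (deriv (τ) t) * (py (px u) x y t) + (-1/1 : ℝ) * (deriv (b) t) * (τ t) * (py (px u) x y t) + (1/3 : ℝ) * (deriv (deriv (τ)) t) * (px u x y t) + (2/3 : ℝ) * (deriv (deriv (τ)) t) * (py (px u) x y t) * y + (-1/3 : ℝ) * (deriv (deriv (deriv (τ))) t)) * hε2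
end

section
/- Let ε = 1 or ε = −1, let b₀, b₁, c₀, c₁, c₂, ρ, σ : ℝ → ℝ be smooth, and let ξ : ℝ → ℝ be smooth with ξ(t) ≠ 0 for all t. Then the function u(x,y,t) = (ξ′(t)/ξ(t))x − (ε/2)(ξ″(t)/ξ(t))y² + ρ(t)y + σ(t) satisfies (u_t + u u_x + u_xxx)_x + ε u_yy + (b₁(t)y + b₀(t)) u_xy + (c₂(t)y² + c₁(t)y + c₀(t)) u_xx = 0 at every point of ℝ³. -/
/-- The canonical generalized KP equation (5.7). -/
def SolvesGKP57 (ε : ℝ) (b₀ b₁ c₀ c₁ c₂ : ℝ → ℝ) (u : ℝ → ℝ → ℝ → ℝ) : Prop :=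
  ∀ x y t : ℝ,
    px (fun x y t => pt u x y t + u x y t * px u x y t + px (px (px u)) x y t) x y t
      + ε * py (py u) x y t + (b₁ t * y + b₀ t) * px (py u) x y t
      + (c₂ t * y ^ 2 + c₁ t * y + c₀ t) * px (px u) x y t = 0

private lemma deriv_affine (a k x : ℝ) : deriv (fun s : ℝ => a * s + k) x = a := by
  simpa using (((hasDerivAt_id x).const_mul a).add_const k).deriv

/-- the `X(ξ)`-invariant function (6.5) solves equation (5.7). -/
theorem stmt11 (ε : ℝ) (hε : ε = 1 ∨ ε = -1)
    (b₀ b₁ c₀ c₁ c₂ ρ σ : ℝ → ℝ)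
    (hb₀ : ContDiff ℝ (⊤ : ℕ∞) b₀) (hb₁ : ContDiff ℝ (⊤ : ℕ∞) b₁) (hc₀ : ContDiff ℝ (⊤ : ℕ∞) c₀)
    (hc₁ : ContDiff ℝ (⊤ : ℕ∞) c₁) (hc₂ : ContDiff ℝ (⊤ : ℕ∞) c₂)
    (hρ : ContDiff ℝ (⊤ : ℕ∞) ρ) (hσ : ContDiff ℝ (⊤ : ℕ∞) σ)
    (ξ : ℝ → ℝ) (hξ : ContDiff ℝ (⊤ : ℕ∞) ξ) (hξ0 : ∀ t, ξ t ≠ 0)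
    (u : ℝ → ℝ → ℝ → ℝ)
    (hu : u = fun x y t => deriv ξ t / ξ t * x - ε / 2 * (deriv (deriv ξ) t / ξ t) * y ^ 2
        + ρ t * y + σ t) :
    SolvesGKP57 ε b₀ b₁ c₀ c₁ c₂ u := by
  subst hu
  have hxii : ContDiff ℝ (⊤ : ℕ∞) ξ := hξ.of_le (by simp)
  have hξd : Differentiable ℝ ξ := hxii.differentiable (by simp)
  have hξ' : ContDiff ℝ (⊤ : ℕ∞) (deriv ξ) := (contDiff_infty_iff_deriv.mp hxii).2
  have hξ'd : Differentiable ℝ (deriv ξ) := hξ'.differentiable (by simp)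
  have hξ'' : ContDiff ℝ (⊤ : ℕ∞) (deriv (deriv ξ)) := (contDiff_infty_iff_deriv.mp hξ').2
  have hξ''d : Differentiable ℝ (deriv (deriv ξ)) := hξ''.differentiable (by simp)
  have hρd : Differentiable ℝ ρ := hρ.differentiable (by simp)
  have hσd : Differentiable ℝ σ := hσ.differentiable (by simp)
  set U : ℝ → ℝ → ℝ → ℝ := fun x y t =>
      deriv ξ t / ξ t * x - ε / 2 * (deriv (deriv ξ) t / ξ t) * y ^ 2 + ρ t * y + σ t with hU
  -- x-derivative
  have hpx : px U = fun _ _ c => deriv ξ c / ξ c := by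
    funext a b c
    have : (fun s => U s b c) = fun s => (deriv ξ c / ξ c) * s +
        (- (ε / 2 * (deriv (deriv ξ) c / ξ c) * b ^ 2) + ρ c * b + σ c) := by
      funext s; simp only [hU]; ring
    rw [px, this, deriv_affine]
  have hpxx : px (px U) = fun _ _ _ => (0 : ℝ) := by
    funext a b c
    rw [px, hpx]
    simp
  have hpxxx : px (px (px U)) = fun _ _ _ => (0 : ℝ) := by
    funext a b c
    rw [px, hpxx]
    simp
  -- y-derivative
  have hpy : py U = fun _ b c => -(ε * (deriv (deriv ξ) c / ξ c)) * b + ρ c := by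
    funext a b c
    have h2 : HasDerivAt (fun s : ℝ => s ^ 2) (2 * b) b := by
      simpa using hasDerivAt_pow 2 b
    have H : HasDerivAt (fun s => U a s c)
        (0 - ε / 2 * (deriv (deriv ξ) c / ξ c) * (2 * b) + ρ c * 1 + 0) b := by
      exact (((hasDerivAt_const b (deriv ξ c / ξ c * a)).sub
        (h2.const_mul (ε / 2 * (deriv (deriv ξ) c / ξ c)))).add
        ((hasDerivAt_id b).const_mul (ρ c))).add_const (σ c) |>.congr_deriv (by ring)
    rw [py, H.deriv]; ring
  have hpyy : py (py U) = fun _ _ c => -(ε * (deriv (deriv ξ) c / ξ c)) := by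
    funext a b c
    rw [py, hpy, deriv_affine]
  have hpxy : px (py U) = fun _ _ _ => (0 : ℝ) := by
    funext a b c
    rw [px, hpy]
    simp
  -- t-derivative
  have hAd : ∀ c : ℝ, HasDerivAt (fun s => deriv ξ s / ξ s)
      ((deriv (deriv ξ) c * ξ c - deriv ξ c * deriv ξ c) / ξ c ^ 2) c := fun c =>
    ((hξ'd c).hasDerivAt).div ((hξd c).hasDerivAt) (hξ0 c)
  have hCd : ∀ c : ℝ, HasDerivAt (fun s => deriv (deriv ξ) s / ξ s)
      ((deriv (deriv (deriv ξ)) c * ξ c - deriv (deriv ξ) c * deriv ξ c) / ξ c ^ 2) c := fun c =>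
    ((hξ''d c).hasDerivAt).div ((hξd c).hasDerivAt) (hξ0 c)
  set dA : ℝ → ℝ := fun c => (deriv (deriv ξ) c * ξ c - deriv ξ c * deriv ξ c) / ξ c ^ 2 with hdA
  set dC : ℝ → ℝ := fun c =>
      (deriv (deriv (deriv ξ)) c * ξ c - deriv (deriv ξ) c * deriv ξ c) / ξ c ^ 2 with hdC
  have hpt : pt U = fun a b c =>
      dA c * a - ε / 2 * dC c * b ^ 2 + deriv ρ c * b + deriv σ c := by
    funext a b c
    have H : HasDerivAt (fun s => U a b s)
        (dA c * a - ε / 2 * dC c * b ^ 2 + deriv ρ c * b + deriv σ c) c := by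
      exact ((((hAd c).mul_const a).sub
        (((hCd c).const_mul (ε / 2)).mul_const (b ^ 2))).add
        (((hρd c).hasDerivAt).mul_const b)).add ((hσd c).hasDerivAt) |>.congr_deriv (by ring)
    rw [pt, H.deriv]
  intro x y t
  rw [hpxxx, hpxx, hpxy, hpyy, hpt, hpx]
  have hinner : (fun s => dA t * s - ε / 2 * dC t * y ^ 2 + deriv ρ t * y + deriv σ t
      + U s y t * (deriv ξ t / ξ t) + 0)
      = fun s => (dA t + (deriv ξ t / ξ t) * (deriv ξ t / ξ t)) * s +
        (- (ε / 2 * dC t * y ^ 2) + deriv ρ t * y + deriv σ t +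
          (- (ε / 2 * (deriv (deriv ξ) t / ξ t) * y ^ 2) + ρ t * y + σ t) * (deriv ξ t / ξ t)) := by
    funext s; simp only [hU]; ring
  rw [px, hinner, deriv_affine, hdA]
  rcases hε with h | h <;> subst h <;> field_simp [hξ0 t] <;> ring
end

section
/- Let ε = 1 or ε = −1, let a : ℝ² → ℝ (a function of (y,t)) and b, c : ℝ² → ℝ be smooth, let ξ : ℝ → ℝ be smooth with ξ(t) ≠ 0 for all t, and let F : ℝ² → ℝ be smooth. Define u(x,y,t) := (ξ′(t)/ξ(t))x + F(y,t). Then u satisfies (u_t + u u_x + u_xxx)_x + ε u_yy + a(y,t) u_y + b(y,t) u_xy + c(y,t) u_xx = 0 at every point of ℝ³ if and only if F satisfies ε F_yy(y,t) + a(y,t) F_y(y,t) + ξ″(t)/ξ(t) = 0 at every point of ℝ². -/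
/-- Partial derivative of a function of `(y, t)` in the first (y) variable. -/
noncomputable def qy (F : ℝ → ℝ → ℝ) (y t : ℝ) : ℝ := deriv (fun s => F s t) y

/-- the `X(ξ)`-invariant ansatz `u = (ξ′/ξ)x + F(y,t)` solves the CGKP
equation iff `F` solves the reduced linear equation (6.10). -/
theorem stmt12 (ε : ℝ) (hε : ε = 1 ∨ ε = -1)
    (a b c : ℝ → ℝ → ℝ) (ha : Smooth2 a) (hb : Smooth2 b) (hc : Smooth2 c)
    (ξ : ℝ → ℝ) (hξ : ContDiff ℝ (⊤ : ℕ∞) ξ) (hξ0 : ∀ t, ξ t ≠ 0)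
    (F : ℝ → ℝ → ℝ) (hF : Smooth2 F)
    (u : ℝ → ℝ → ℝ → ℝ)
    (hu : u = fun x y t => deriv ξ t / ξ t * x + F y t) :
    SolvesCGKP ε a b c u ↔
      ∀ y t : ℝ, ε * qy (qy F) y t + a y t * qy F y t + deriv (deriv ξ) t / ξ t = 0 := by
  set g : ℝ → ℝ := fun t => deriv ξ t / ξ t with hg
  have h1inf : (1 : WithTop ℕ∞) ≤ ((⊤ : ℕ∞) : WithTop ℕ∞) := by exact_mod_cast le_top
  have hξ' : ContDiff ℝ ((⊤ : ℕ∞) : WithTop ℕ∞) (deriv ξ) :=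
    (contDiff_infty_iff_deriv.mp (hξ.of_le (by simp))).2
  have hgdiff : Differentiable ℝ g :=
    (hξ'.differentiable (by simp)).div (hξ.differentiable (by simp)) hξ0
  have hFt : ∀ y, Differentiable ℝ (fun s => F y s) := by
    intro y
    have : ContDiff ℝ (⊤ : ℕ∞) (fun s : ℝ => F y s) :=
      hF.comp (contDiff_const.prodMk contDiff_id)
    exact this.differentiable (by simp)
  have hpx : px u = fun _ _ t => g t := by
    funext x y t
    simp only [px, hu]
    simpa [hg] using ((((hasDerivAt_id x).const_mul (g t)).add_const (F y t)).deriv)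
  have hpxx : px (px u) = fun _ _ _ => (0 : ℝ) := by
    rw [hpx]; funext x y t; simp [px]
  have hpxxx : px (px (px u)) = fun _ _ _ => (0 : ℝ) := by
    rw [hpxx]; funext x y t; simp [px]
  have hpy : py u = fun _ y t => qy F y t := by
    funext x y t
    simp only [py, hu, qy]
    rw [deriv_const_add]
  have hpxpy : px (py u) = fun _ _ _ => (0 : ℝ) := by
    rw [hpy]; funext x y t; simp [px]
  have hpypy : py (py u) = fun _ y t => qy (qy F) y t := by
    rw [hpy]; funext x y t; rfl
  have hpt : pt u = fun x y t => deriv g t * x + deriv (fun s => F y s) t := by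
    funext x y t
    have h : HasDerivAt (fun s => g s * x + F y s)
        (deriv g t * x + deriv (fun s => F y s) t) t :=
      (((hgdiff t).hasDerivAt).mul_const x).add ((hFt y t).hasDerivAt)
    simp only [pt, hu]
    exact h.deriv
  have hkey : ∀ t, deriv g t + g t * g t = deriv (deriv ξ) t / ξ t := by
    intro t
    have hd : deriv g t =
        (deriv (deriv ξ) t * ξ t - deriv ξ t * deriv ξ t) / (ξ t) ^ 2 := by
      rw [hg]
      exact deriv_div (hξ'.differentiable (by simp) t) (hξ.differentiable (by simp) t) (hξ0 t)
    have h0 := hξ0 t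
    rw [hd]
    simp only [hg]
    field_simp
    ring
  have hbracket : ∀ x y t : ℝ,
      px (fun x y t => pt u x y t + u x y t * px u x y t + px (px (px u)) x y t) x y t
        = deriv (deriv ξ) t / ξ t := by
    intro x y t
    have hfun : (fun s => pt u s y t + u s y t * px u s y t + px (px (px u)) s y t)
        = fun s => (deriv g t * s + deriv (fun s' => F y s') t)
            + (g t * s + F y t) * g t + 0 := by
      funext s
      rw [hpt, hpxxx, hpx, hu]
    have h1 : HasDerivAt (fun s => deriv g t * s + deriv (fun s' => F y s') t)
        (deriv g t) x := by
      simpa using ((hasDerivAt_id x).const_mul (deriv g t)).add_const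
        (deriv (fun s' => F y s') t)
    have h2 : HasDerivAt (fun s => (g t * s + F y t) * g t) (g t * g t) x := by
      simpa using (((hasDerivAt_id x).const_mul (g t)).add_const (F y t)).mul_const (g t)
    have h := (h1.add h2).add_const 0
    have hpxval : px (fun x y t => pt u x y t + u x y t * px u x y t
        + px (px (px u)) x y t) x y t
        = deriv (fun s => pt u s y t + u s y t * px u s y t + px (px (px u)) s y t) x := rfl
    rw [hpxval, hfun]
    exact h.deriv.trans (hkey t)
  constructor
  · intro hsol y t
    have h := hsol 0 y t
    rw [hbracket, hpypy, hpxpy, hpxx, hpy] at h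
    simp only [mul_zero, add_zero] at h
    linarith
  · intro hred x y t
    rw [hbracket, hpypy, hpxpy, hpxx, hpy]
    simp only [mul_zero, add_zero]
    have h := hred y t
    linarith
end

section
/- Let ε = 1 or ε = −1, let m, A, C : ℝ → ℝ be smooth with m(t) ≠ 1 for all t, and let ξ : ℝ → ℝ be smooth with ξ(t) ≠ 0 for all t. Define, for y > 0 and t ∈ ℝ, F(y,t) := A(t)·y^{m(t)+1} + ( ξ″(t) / (2εξ(t)(m(t) − 1)) )·y² + C(t). Then F satisfies ε F_yy(y,t) − ε (m(t)/y) F_y(y,t) + ξ″(t)/ξ(t) = 0 for all y > 0 and all t ∈ ℝ. -/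
/-- the explicit solution (6.13) of the reduced equation (6.10) with
coefficient `a(y,t) = −ε m(t)/y`, valid for `y > 0`. -/
theorem stmt14 (ε : ℝ) (hε : ε = 1 ∨ ε = -1)
    (m A C : ℝ → ℝ) (hm : ContDiff ℝ (⊤ : ℕ∞) m) (hA : ContDiff ℝ (⊤ : ℕ∞) A) (hC : ContDiff ℝ (⊤ : ℕ∞) C)
    (hm1 : ∀ t, m t ≠ 1)
    (ξ : ℝ → ℝ) (hξ : ContDiff ℝ (⊤ : ℕ∞) ξ) (hξ0 : ∀ t, ξ t ≠ 0)
    (F : ℝ → ℝ → ℝ)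
    (hF : F = fun y t => A t * y ^ (m t + 1)
        + deriv (deriv ξ) t / (2 * ε * ξ t * (m t - 1)) * y ^ 2 + C t) :
    ∀ y t : ℝ, 0 < y →
      ε * qy (qy F) y t - ε * (m t / y) * qy F y t + deriv (deriv ξ) t / ξ t = 0 := by
  intro y t hy
  have hε0 : ε ≠ 0 := by rcases hε with h | h <;> rw [h] <;> norm_num
  have hmne : m t - 1 ≠ 0 := sub_ne_zero.mpr (hm1 t)
  set D := deriv (deriv ξ) t with hD
  set k := D / (2 * ε * ξ t * (m t - 1)) with hk
  have h1 : ∀ s : ℝ, 0 < s → HasDerivAt (fun s => F s t)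
      (A t * ((m t + 1) * s ^ (m t)) + k * (2 * s)) s := by
    intro s hs
    have hr : HasDerivAt (fun x : ℝ => x ^ (m t + 1)) ((m t + 1) * s ^ (m t + 1 - 1)) s :=
      Real.hasDerivAt_rpow_const (Or.inl hs.ne')
    have hsq : HasDerivAt (fun x : ℝ => x ^ 2) (2 * s) s := by
      simpa using hasDerivAt_pow 2 s
    have := ((hr.const_mul (A t)).add (hsq.const_mul k)).add_const (C t)
    rw [hF]
    simpa [add_sub_cancel_right] using this
  have hqy : ∀ s : ℝ, 0 < s → qy F s t = A t * ((m t + 1) * s ^ (m t)) + k * (2 * s) := by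
    intro s hs
    exact (h1 s hs).deriv
  have heq : (fun s => qy F s t) =ᶠ[nhds y]
      (fun s => A t * ((m t + 1) * s ^ (m t)) + k * (2 * s)) := by
    filter_upwards [Ioi_mem_nhds hy] with s hs
    exact hqy s hs
  have h2 : HasDerivAt (fun s : ℝ => A t * ((m t + 1) * s ^ (m t)) + k * (2 * s))
      (A t * ((m t + 1) * (m t * y ^ (m t - 1))) + k * 2) y := by
    have hr : HasDerivAt (fun x : ℝ => x ^ (m t)) (m t * y ^ (m t - 1)) y :=
      Real.hasDerivAt_rpow_const (Or.inl hy.ne')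
    have hl : HasDerivAt (fun s : ℝ => k * (2 * s)) (k * 2) y := by
      simpa [mul_assoc] using ((hasDerivAt_id y).const_mul (2 : ℝ)).const_mul k
    exact ((hr.const_mul (m t + 1)).const_mul (A t)).add hl
  have hqy2 : qy (qy F) y t = A t * ((m t + 1) * (m t * y ^ (m t - 1))) + k * 2 := by
    have := heq.deriv_eq
    rw [qy, this]
    exact h2.deriv
  have hym : y ^ (m t) = y ^ (m t - 1) * y := by
    rw [Real.rpow_sub_one hy.ne', div_mul_cancel₀ _ hy.ne']
  rw [hqy2, hqy y hy, hym, hk]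
  have hξt := hξ0 t
  field_simp
  ring
end

section
/- Let ε = 1 or ε = −1 and let b₀, b₁, c₀, c₁, c₂ : ℝ → ℝ be smooth. Then there exist smooth functions S₁, S₀, β₁, β₀, γ : ℝ → ℝ such that for every smooth ũ : ℝ³ → ℝ satisfying (ũ_t + ũ ũ_x + ũ_xxx)_x + ε ũ_yy + b₁(t)·y·ũ_xy + c₂(t)·y²·ũ_xx = 0 at every point, the function u(x,y,t) := ũ( x + β₁(t)y + β₀(t), y + γ(t), t ) + S₁(t)y + S₀(t) satisfies (u_t + u u_x + u_xxx)_x + ε u_yy + (b₁(t)y + b₀(t)) u_xy + (c₂(t)y² + c₁(t)y + c₀(t)) u_xx = 0 at every point. -/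
namespace S18

noncomputable def unc (v : ℝ → ℝ → ℝ → ℝ) : ℝ × ℝ × ℝ → ℝ := fun p => v p.1 p.2.1 p.2.2

variable {v w : ℝ → ℝ → ℝ → ℝ} {b s1 s0 : ℝ → ℝ}

theorem hasDerivAt_comp3 (hv : Smooth3 v) {α β δ : ℝ → ℝ} {α' β' δ' s : ℝ}
    (hα : HasDerivAt α α' s) (hβ : HasDerivAt β β' s) (hδ : HasDerivAt δ δ' s) :
    HasDerivAt (fun r => v (α r) (β r) (δ r))
      (fderiv ℝ (unc v) (α s, β s, δ s) (α', β', δ')) s := by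
  have hc : HasDerivAt (fun r => ((α r, β r, δ r) : ℝ × ℝ × ℝ)) (α', β', δ') s :=
    hα.prodMk (hβ.prodMk hδ)
  exact ((hv.differentiable (by simp)) (α s, β s, δ s)).hasFDerivAt.comp_hasDerivAt s hc

theorem px_eq_fderiv (hv : Smooth3 v) (x y t : ℝ) :
    px v x y t = fderiv ℝ (unc v) (x, y, t) (1, 0, 0) := by
  have h := hasDerivAt_comp3 hv (hasDerivAt_id x) (hasDerivAt_const x y) (hasDerivAt_const x t)
  simpa [px] using h.deriv

theorem py_eq_fderiv (hv : Smooth3 v) (x y t : ℝ) :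
    py v x y t = fderiv ℝ (unc v) (x, y, t) (0, 1, 0) := by
  have h := hasDerivAt_comp3 hv (hasDerivAt_const y x) (hasDerivAt_id y) (hasDerivAt_const y t)
  simpa [py] using h.deriv

theorem pt_eq_fderiv (hv : Smooth3 v) (x y t : ℝ) :
    pt v x y t = fderiv ℝ (unc v) (x, y, t) (0, 0, 1) := by
  have h := hasDerivAt_comp3 hv (hasDerivAt_const t x) (hasDerivAt_const t y) (hasDerivAt_id t)
  simpa [pt] using h.deriv

theorem fderiv_apply_eq (hv : Smooth3 v) (x y t a b c : ℝ) :
    fderiv ℝ (unc v) (x, y, t) (a, b, c)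
      = a * px v x y t + b * py v x y t + c * pt v x y t := by
  have hvec : ((a, b, c) : ℝ × ℝ × ℝ)
      = a • ((1:ℝ), (0:ℝ), (0:ℝ)) + b • ((0:ℝ), (1:ℝ), (0:ℝ)) + c • ((0:ℝ), (0:ℝ), (1:ℝ)) := by
    simp [Prod.ext_iff]
  rw [hvec, map_add, map_add, map_smul, map_smul, map_smul,
    px_eq_fderiv hv, py_eq_fderiv hv, pt_eq_fderiv hv]
  simp [smul_eq_mul]

theorem hasDerivAt_comp3' (hv : Smooth3 v) {α β δ : ℝ → ℝ} {α' β' δ' s : ℝ}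
    (hα : HasDerivAt α α' s) (hβ : HasDerivAt β β' s) (hδ : HasDerivAt δ δ' s) :
    HasDerivAt (fun r => v (α r) (β r) (δ r))
      (α' * px v (α s) (β s) (δ s) + β' * py v (α s) (β s) (δ s)
        + δ' * pt v (α s) (β s) (δ s)) s := by
  have h := hasDerivAt_comp3 hv hα hβ hδ
  rwa [fderiv_apply_eq hv] at h

theorem smooth3_px (hv : Smooth3 v) : Smooth3 (px v) := by
  have h1 : ContDiff ℝ (⊤ : ℕ∞) (fun p : ℝ × ℝ × ℝ => fderiv ℝ (unc v) p ((1:ℝ), (0:ℝ), (0:ℝ))) :=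
    (hv.fderiv_right (by simp)).clm_apply contDiff_const
  have h2 : (fun p : ℝ × ℝ × ℝ => px v p.1 p.2.1 p.2.2)
      = fun p : ℝ × ℝ × ℝ => fderiv ℝ (unc v) p ((1:ℝ), (0:ℝ), (0:ℝ)) :=
    funext fun p => px_eq_fderiv hv p.1 p.2.1 p.2.2
  unfold Smooth3; rw [h2]; exact h1

theorem smooth3_py (hv : Smooth3 v) : Smooth3 (py v) := by
  have h1 : ContDiff ℝ (⊤ : ℕ∞) (fun p : ℝ × ℝ × ℝ => fderiv ℝ (unc v) p ((0:ℝ), (1:ℝ), (0:ℝ))) :=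
    (hv.fderiv_right (by simp)).clm_apply contDiff_const
  have h2 : (fun p : ℝ × ℝ × ℝ => py v p.1 p.2.1 p.2.2)
      = fun p : ℝ × ℝ × ℝ => fderiv ℝ (unc v) p ((0:ℝ), (1:ℝ), (0:ℝ)) :=
    funext fun p => py_eq_fderiv hv p.1 p.2.1 p.2.2
  unfold Smooth3; rw [h2]; exact h1

theorem smooth3_pt (hv : Smooth3 v) : Smooth3 (pt v) := by
  have h1 : ContDiff ℝ (⊤ : ℕ∞) (fun p : ℝ × ℝ × ℝ => fderiv ℝ (unc v) p ((0:ℝ), (0:ℝ), (1:ℝ))) :=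
    (hv.fderiv_right (by simp)).clm_apply contDiff_const
  have h2 : (fun p : ℝ × ℝ × ℝ => pt v p.1 p.2.1 p.2.2)
      = fun p : ℝ × ℝ × ℝ => fderiv ℝ (unc v) p ((0:ℝ), (0:ℝ), (1:ℝ)) :=
    funext fun p => pt_eq_fderiv hv p.1 p.2.1 p.2.2
  unfold Smooth3; rw [h2]; exact h1

theorem pxy_symm (hv : Smooth3 v) (x y t : ℝ) : py (px v) x y t = px (py v) x y t := by
  have hG : ContDiff ℝ (⊤ : ℕ∞) (fderiv ℝ (unc v)) := hv.fderiv_right (by simp)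
  have hsym : IsSymmSndFDerivAt ℝ (unc v) (x, y, t) :=
    hv.contDiffAt.isSymmSndFDerivAt (by rw [minSmoothness_of_isRCLikeNormedField]; exact WithTop.coe_le_coe.mpr le_top)
  have hGd : DifferentiableAt ℝ (fderiv ℝ (unc v)) (x, y, t) :=
    (hG.differentiable (by simp)) _
  have hcy : HasDerivAt (fun s => ((x, s, t) : ℝ × ℝ × ℝ)) (0, 1, 0) y :=
    (hasDerivAt_const y x).prodMk ((hasDerivAt_id y).prodMk (hasDerivAt_const y t))
  have h1 : HasDerivAt (fun s => fderiv ℝ (unc v) (x, s, t))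
      (fderiv ℝ (fderiv ℝ (unc v)) (x, y, t) (0, 1, 0)) y :=
    hGd.hasFDerivAt.comp_hasDerivAt y hcy
  have h1' : HasDerivAt (fun s => fderiv ℝ (unc v) (x, s, t) ((1:ℝ), (0:ℝ), (0:ℝ)))
      (fderiv ℝ (fderiv ℝ (unc v)) (x, y, t) (0, 1, 0) ((1:ℝ), (0:ℝ), (0:ℝ))) y := by
    simpa using h1.clm_apply (hasDerivAt_const y ((1:ℝ), (0:ℝ), (0:ℝ)))
  have e1 : py (px v) x y t
      = fderiv ℝ (fderiv ℝ (unc v)) (x, y, t) (0, 1, 0) ((1:ℝ), (0:ℝ), (0:ℝ)) := by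
    have hfun : (fun s => px v x s t)
        = fun s => fderiv ℝ (unc v) (x, s, t) ((1:ℝ), (0:ℝ), (0:ℝ)) :=
      funext fun s => px_eq_fderiv hv x s t
    show deriv (fun s => px v x s t) y = _
    rw [hfun]; exact h1'.deriv
  have hcx : HasDerivAt (fun s => ((s, y, t) : ℝ × ℝ × ℝ)) (1, 0, 0) x :=
    (hasDerivAt_id x).prodMk ((hasDerivAt_const x y).prodMk (hasDerivAt_const x t))
  have h2 : HasDerivAt (fun s => fderiv ℝ (unc v) (s, y, t))
      (fderiv ℝ (fderiv ℝ (unc v)) (x, y, t) (1, 0, 0)) x :=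
    hGd.hasFDerivAt.comp_hasDerivAt x hcx
  have h2' : HasDerivAt (fun s => fderiv ℝ (unc v) (s, y, t) ((0:ℝ), (1:ℝ), (0:ℝ)))
      (fderiv ℝ (fderiv ℝ (unc v)) (x, y, t) (1, 0, 0) ((0:ℝ), (1:ℝ), (0:ℝ))) x := by
    simpa using h2.clm_apply (hasDerivAt_const x ((0:ℝ), (1:ℝ), (0:ℝ)))
  have e2 : px (py v) x y t
      = fderiv ℝ (fderiv ℝ (unc v)) (x, y, t) (1, 0, 0) ((0:ℝ), (1:ℝ), (0:ℝ)) := by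
    have hfun : (fun s => py v s y t)
        = fun s => fderiv ℝ (unc v) (s, y, t) ((0:ℝ), (1:ℝ), (0:ℝ)) :=
      funext fun s => py_eq_fderiv hv s y t
    show deriv (fun s => py v s y t) x = _
    rw [hfun]; exact h2'.deriv
  rw [e1, e2]
  exact hsym _ _

/-- derivative of a smooth real function is smooth -/
theorem contDiff_deriv_top {f : ℝ → ℝ} (hf : ContDiff ℝ (⊤ : ℕ∞) f) : ContDiff ℝ (⊤ : ℕ∞) (deriv f) := by
  exact (contDiff_infty_iff_deriv.mp hf).2

/-- the basic shear transformation -/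
def Tr (b : ℝ → ℝ) (w : ℝ → ℝ → ℝ → ℝ) : ℝ → ℝ → ℝ → ℝ := fun x y t => w (x + b t * y) y t

theorem hasDerivAt_Tr_x (hw : Smooth3 w) (b : ℝ → ℝ) (x y t : ℝ) :
    HasDerivAt (fun s => Tr b w s y t) (Tr b (px w) x y t) x := by
  have h := hasDerivAt_comp3' hw ((hasDerivAt_id x).add_const (b t * y))
    (hasDerivAt_const x y) (hasDerivAt_const x t)
  simpa [Tr] using h

theorem hasDerivAt_Tr_y (hw : Smooth3 w) (b : ℝ → ℝ) (x y t : ℝ) :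
    HasDerivAt (fun s => Tr b w x s t)
      (b t * Tr b (px w) x y t + Tr b (py w) x y t) y := by
  have hα : HasDerivAt (fun s : ℝ => x + b t * s) (b t) y := by
    simpa using ((hasDerivAt_id y).const_mul (b t)).const_add x
  have h := hasDerivAt_comp3' hw hα (hasDerivAt_id y) (hasDerivAt_const y t)
  simpa [Tr] using h

theorem hasDerivAt_Tr_t (hb : ContDiff ℝ (⊤ : ℕ∞) b) (hw : Smooth3 w) (x y t : ℝ) :
    HasDerivAt (fun s => Tr b w x y s)
      (deriv b t * y * Tr b (px w) x y t + Tr b (pt w) x y t) t := by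
  have hα : HasDerivAt (fun s : ℝ => x + b s * y) (deriv b t * y) t := by
    simpa using
      (((hb.differentiable (by simp)) t).hasDerivAt.mul_const y).const_add x
  have h := hasDerivAt_comp3' hw hα (hasDerivAt_const t y) (hasDerivAt_id t)
  simpa [Tr] using h

theorem px_Tr (hw : Smooth3 w) (b : ℝ → ℝ) : px (Tr b w) = Tr b (px w) := by
  funext x y t
  exact (hasDerivAt_Tr_x hw b x y t).deriv

theorem hasDerivAt_px' (hw : Smooth3 w) (x y t : ℝ) :
    HasDerivAt (fun s => w s y t) (px w x y t) x := by
  have h := hasDerivAt_comp3' hw (hasDerivAt_id x) (hasDerivAt_const x y) (hasDerivAt_const x t)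
  simpa using h

/-- the full transformation -/
def U (b s1 s0 : ℝ → ℝ) (v : ℝ → ℝ → ℝ → ℝ) : ℝ → ℝ → ℝ → ℝ :=
  fun x y t => v (x + b t * y) y t + s1 t * y + s0 t

theorem px_U (hv : Smooth3 v) : px (U b s1 s0 v) = Tr b (px v) := by
  funext x y t
  exact (((hasDerivAt_Tr_x hv b x y t).add_const (s1 t * y)).add_const (s0 t)).deriv

theorem py_U (hv : Smooth3 v) :
    py (U b s1 s0 v) = fun x y t =>
      b t * Tr b (px v) x y t + Tr b (py v) x y t + s1 t := by
  funext x y t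
  have h := ((hasDerivAt_Tr_y hv b x y t).add
    ((hasDerivAt_id y).const_mul (s1 t))).add_const (s0 t)
  have hval : b t * Tr b (px v) x y t + Tr b (py v) x y t + s1 t
      = (b t * Tr b (px v) x y t + Tr b (py v) x y t) + s1 t * 1 := by ring
  rw [hval]
  exact h.deriv

theorem pt_U (hb : ContDiff ℝ (⊤ : ℕ∞) b) (hs1 : ContDiff ℝ (⊤ : ℕ∞) s1) (hs0 : ContDiff ℝ (⊤ : ℕ∞) s0)
    (hv : Smooth3 v) (x y t : ℝ) :
    pt (U b s1 s0 v) x y t =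
      deriv b t * y * Tr b (px v) x y t + Tr b (pt v) x y t
        + deriv s1 t * y + deriv s0 t := by
  have h := (((hasDerivAt_Tr_t hb hv x y t).add
      (((hs1.differentiable (by simp)) t).hasDerivAt.mul_const y)).add
      ((hs0.differentiable (by simp)) t).hasDerivAt)
  exact h.deriv

theorem main_aux (ε : ℝ) (hε2 : ε * ε = 1) (b₀ b₁ c₀ c₁ c₂ b s1 s0 : ℝ → ℝ)
    (hb : ContDiff ℝ (⊤ : ℕ∞) b) (hs1 : ContDiff ℝ (⊤ : ℕ∞) s1) (hs0 : ContDiff ℝ (⊤ : ℕ∞) s0)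
    (hbval : ∀ t, 2 * ε * b t + b₀ t = 0)
    (hs1val : ∀ t, s1 t = -c₁ t - deriv b t - b₁ t * b t)
    (hs0val : ∀ t, s0 t = -c₀ t - ε * b t ^ 2 - b₀ t * b t)
    (v : ℝ → ℝ → ℝ → ℝ) (hv : Smooth3 v)
    (hsol : SolvesGKP57 ε (fun _ => 0) b₁ (fun _ => 0) (fun _ => 0) c₂ v) :
    SolvesGKP57 ε b₀ b₁ c₀ c₁ c₂ (U b s1 s0 v) := by
  intro x y t
  have hv1 : Smooth3 (px v) := smooth3_px hv
  have hv2 : Smooth3 (py v) := smooth3_py hv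
  have hv3 : Smooth3 (pt v) := smooth3_pt hv
  have hv11 : Smooth3 (px (px v)) := smooth3_px hv1
  have hv111 : Smooth3 (px (px (px v))) := smooth3_px hv11
  -- function-level identities
  have hpx : px (U b s1 s0 v) = Tr b (px v) := px_U hv
  have hpxx : px (px (U b s1 s0 v)) = Tr b (px (px v)) := by rw [hpx, px_Tr hv1]
  have hpxxx : px (px (px (U b s1 s0 v))) = Tr b (px (px (px v))) := by
    rw [hpxx, px_Tr hv11]
  have hpy : py (U b s1 s0 v) = fun x y t =>
      b t * Tr b (px v) x y t + Tr b (py v) x y t + s1 t := py_U hv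
  -- pointwise mixed/second derivatives
  have hpxy : px (py (U b s1 s0 v)) x y t
      = b t * Tr b (px (px v)) x y t + Tr b (px (py v)) x y t := by
    rw [hpy]
    exact ((((hasDerivAt_Tr_x hv1 b x y t).const_mul (b t)).add
      (hasDerivAt_Tr_x hv2 b x y t)).add_const (s1 t)).deriv
  have hpyy : py (py (U b s1 s0 v)) x y t
      = b t * (b t * Tr b (px (px v)) x y t + Tr b (py (px v)) x y t)
        + (b t * Tr b (px (py v)) x y t + Tr b (py (py v)) x y t) := by
    rw [hpy]
    exact ((((hasDerivAt_Tr_y hv1 b x y t).const_mul (b t)).add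
      (hasDerivAt_Tr_y hv2 b x y t)).add_const (s1 t)).deriv
  -- the time-derivative part, as a function identity
  have hW : (fun x y t => pt (U b s1 s0 v) x y t
        + U b s1 s0 v x y t * px (U b s1 s0 v) x y t
        + px (px (px (U b s1 s0 v))) x y t)
      = fun x y t =>
        (deriv b t * y * Tr b (px v) x y t + Tr b (pt v) x y t
          + deriv s1 t * y + deriv s0 t)
        + (Tr b v x y t + s1 t * y + s0 t) * Tr b (px v) x y t
        + Tr b (px (px (px v))) x y t := by
    funext x y t
    rw [pt_U hb hs1 hs0 hv, hpxxx, hpx]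
    rfl
  have hpxW : px (fun x y t => pt (U b s1 s0 v) x y t
        + U b s1 s0 v x y t * px (U b s1 s0 v) x y t
        + px (px (px (U b s1 s0 v))) x y t) x y t
      = ((deriv b t * y * Tr b (px (px v)) x y t + Tr b (px (pt v)) x y t)
        + (Tr b (px v) x y t * Tr b (px v) x y t
            + (Tr b v x y t + s1 t * y + s0 t) * Tr b (px (px v)) x y t))
        + Tr b (px (px (px (px v)))) x y t := by
    rw [hW]
    have hA := ((((hasDerivAt_Tr_x hv1 b x y t).const_mul (deriv b t * y)).add
      (hasDerivAt_Tr_x hv3 b x y t)).add_const (deriv s1 t * y)).add_const (deriv s0 t)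
    have hB := (((hasDerivAt_Tr_x hv b x y t).add_const (s1 t * y)).add_const (s0 t)).mul
      (hasDerivAt_Tr_x hv1 b x y t)
    have hC := hasDerivAt_Tr_x hv111 b x y t
    exact ((hA.add hB).add hC).deriv
  -- the equation satisfied by v at the shifted point
  have hEv := hsol (x + b t * y) y t
  simp only [add_zero, zero_mul, mul_zero] at hEv
  have hE1 : px (fun x y t => pt v x y t + v x y t * px v x y t
        + px (px (px v)) x y t) (x + b t * y) y t
      = (px (pt v) (x + b t * y) y t
        + (px v (x + b t * y) y t * px v (x + b t * y) y t
          + v (x + b t * y) y t * px (px v) (x + b t * y) y t))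
        + px (px (px (px v))) (x + b t * y) y t := by
    exact (((hasDerivAt_px' hv3 (x + b t * y) y t).add
      ((hasDerivAt_px' hv (x + b t * y) y t).mul
        (hasDerivAt_px' hv1 (x + b t * y) y t))).add
      (hasDerivAt_px' hv111 (x + b t * y) y t)).deriv
  rw [hE1] at hEv
  -- symmetry of second derivatives
  have hsym : py (px v) (x + b t * y) y t = px (py v) (x + b t * y) y t :=
    pxy_symm hv (x + b t * y) y t
  -- put everything together
  rw [hpxW, hpyy, hpxy, hpxx]
  simp only [Tr]
  rw [hsym, hs1val t, hs0val t]
  linear_combination hEv + px (py v) (x + b t * y) y t * hbval t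
end S18

/-- by the allowed transformation (5.11) one can set `b₀ = c₁ = c₀ = 0`
in equation (5.7) without changing `b₁` and `c₂`. -/
theorem stmt18 (ε : ℝ) (hε : ε = 1 ∨ ε = -1)
    (b₀ b₁ c₀ c₁ c₂ : ℝ → ℝ) (hb₀ : ContDiff ℝ (⊤ : ℕ∞) b₀) (hb₁ : ContDiff ℝ (⊤ : ℕ∞) b₁)
    (hc₀ : ContDiff ℝ (⊤ : ℕ∞) c₀) (hc₁ : ContDiff ℝ (⊤ : ℕ∞) c₁) (hc₂ : ContDiff ℝ (⊤ : ℕ∞) c₂) :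
    ∃ S₁ S₀ β₁ β₀ γ : ℝ → ℝ,
      ContDiff ℝ (⊤ : ℕ∞) S₁ ∧ ContDiff ℝ (⊤ : ℕ∞) S₀ ∧ ContDiff ℝ (⊤ : ℕ∞) β₁ ∧ ContDiff ℝ (⊤ : ℕ∞) β₀ ∧
      ContDiff ℝ (⊤ : ℕ∞) γ ∧
      ∀ v : ℝ → ℝ → ℝ → ℝ, Smooth3 v →
        SolvesGKP57 ε (fun _ => 0) b₁ (fun _ => 0) (fun _ => 0) c₂ v →
        SolvesGKP57 ε b₀ b₁ c₀ c₁ c₂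
          (fun x y t => v (x + β₁ t * y + β₀ t) (y + γ t) t + S₁ t * y + S₀ t) := by
  have hε2 : ε * ε = 1 := by rcases hε with h | h <;> rw [h] <;> norm_num
  set b : ℝ → ℝ := fun t => -(ε * b₀ t) / 2 with hb_def
  have hb : ContDiff ℝ (⊤ : ℕ∞) b := ((contDiff_const.mul hb₀).neg).div_const 2
  have hdb : ContDiff ℝ (⊤ : ℕ∞) (deriv b) := S18.contDiff_deriv_top hb
  set s1 : ℝ → ℝ := fun t => -c₁ t - deriv b t - b₁ t * b t with hs1_def
  have hs1 : ContDiff ℝ (⊤ : ℕ∞) s1 := (hc₁.neg.sub hdb).sub (hb₁.mul hb)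
  set s0 : ℝ → ℝ := fun t => -c₀ t - ε * b t ^ 2 - b₀ t * b t with hs0_def
  have hs0 : ContDiff ℝ (⊤ : ℕ∞) s0 :=
    (hc₀.neg.sub (contDiff_const.mul (hb.pow 2))).sub (hb₀.mul hb)
  refine ⟨s1, s0, b, fun _ => 0, fun _ => 0, hs1, hs0, hb, contDiff_const, contDiff_const,
    ?_⟩
  intro v hv hsol
  have hUeq : (fun x y t => v (x + b t * y + (fun _ : ℝ => (0:ℝ)) t)
        (y + (fun _ : ℝ => (0:ℝ)) t) t + s1 t * y + s0 t) = S18.U b s1 s0 v := by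
    funext x y t
    simp only [S18.U, add_zero]
  rw [hUeq]
  refine S18.main_aux ε hε2 b₀ b₁ c₀ c₁ c₂ b s1 s0 hb hs1 hs0 ?_ (fun t => rfl)
    (fun t => rfl) v hv hsol
  intro t
  rw [hb_def]
  linear_combination (-(b₀ t)) * hε2
end
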